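/- arXiv:1806.06212 — 8 statements merged into one kernel-verified Lean document; each statement's English description precedes it below -/
import Mathlib

section
/- For any nonnegative integer D, let H2(D; x, y) be the graph consisting of 2D+1 internally disjoint paths of length 2 between two vertices x and y. Then in any (D, D)-coloring of H2(D; x, y) (i.e., a partition of the vertices into two classes each inducing a subgraph of maximum degree at most D), the vertices x and y receive the same color. -/
open SimpleGraph

/-- `H` is a minor of `G`: branch sets are nonempty, connected, pairwise disjoint,
and edges of `H` are realized between branch sets. -/
def SimpleGraph.IsMinor {W V : Type*} (H : SimpleGraph W) (G : SimpleGraph V) : Prop :=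
  ∃ f : W → Set V, (∀ w, (f w).Nonempty) ∧ (∀ w, (G.induce (f w)).Connected) ∧
    (∀ w w', w ≠ w' → Disjoint (f w) (f w')) ∧
    (∀ w w', H.Adj w w' → ∃ a ∈ f w, ∃ b ∈ f w', G.Adj a b)

/-- A graph is planar iff it has no `K₅` minor and no `K₃,₃` minor (Wagner's theorem). -/
def SimpleGraph.Planar {V : Type*} (G : SimpleGraph V) : Prop :=
  ¬ (completeGraph (Fin 5)).IsMinor G ∧
    ¬ (completeBipartiteGraph (Fin 3) (Fin 3)).IsMinor G

/-- `G` contains no cycle of length `n` (as a subgraph). -/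
def SimpleGraph.HasNoCycleOfLength {V : Type*} (G : SimpleGraph V) (n : ℕ) : Prop :=
  ∀ (v : V) (w : G.Walk v v), w.IsCycle → w.length ≠ n

/-- `f` is a `(d 0, …, d (k-1))`-coloring of `G`: each vertex has at most `d (f v)`
neighbors in its own color class. -/
def SimpleGraph.IsDefectiveColoring {V : Type*} {k : ℕ} (G : SimpleGraph V)
    (d : Fin k → ℕ) (f : V → Fin k) : Prop :=
  ∀ v, {u | G.Adj v u ∧ f u = f v}.ncard ≤ d (f v)

/-- `G` is `(d 0, …, d (k-1))`-colorable. -/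
def SimpleGraph.DefectiveColorable {V : Type*} {k : ℕ} (G : SimpleGraph V)
    (d : Fin k → ℕ) : Prop :=
  ∃ f : V → Fin k, G.IsDefectiveColoring d f

/-- `H2 D`: the graph with vertices `x = Sum.inl 0`, `y = Sum.inl 1` joined by
`2D+1` internally disjoint paths of length 2 (internal vertices `Sum.inr i`). -/
def H2 (D : ℕ) : SimpleGraph (Fin 2 ⊕ Fin (2 * D + 1)) :=
  SimpleGraph.fromRel (fun a b => a.isLeft ∧ b.isRight)

theorem stmt0 (D : ℕ) (f : Fin 2 ⊕ Fin (2 * D + 1) → Fin 2)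
    (hf : (H2 D).IsDefectiveColoring ![D, D] f) :
    f (Sum.inl 0) = f (Sum.inl 1) := by
  by_contra h
  have hfin2 : ∀ a b c : Fin 2, a ≠ b → c ≠ a → c = b := by decide
  have hadj : ∀ (i : Fin 2) (j : Fin (2 * D + 1)), (H2 D).Adj (Sum.inl i) (Sum.inr j) := by
    intro i j
    simp [H2]
  set A : Finset (Fin (2 * D + 1)) :=
    Finset.univ.filter (fun j => f (Sum.inr j) = f (Sum.inl 0)) with hA
  set B : Finset (Fin (2 * D + 1)) :=
    Finset.univ.filter (fun j => ¬ f (Sum.inr j) = f (Sum.inl 0)) with hB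
  have hcard : A.card + B.card = 2 * D + 1 := by
    rw [hA, hB, Finset.card_filter_add_card_filter_not]
    simp
  have key : ∀ (i : Fin 2) (S : Finset (Fin (2 * D + 1))),
      (∀ j ∈ S, f (Sum.inr j) = f (Sum.inl i)) → S.card ≤ D := by
    intro i S hS
    have hsub : (Sum.inr '' (S : Set (Fin (2 * D + 1)))) ⊆
        {u | (H2 D).Adj (Sum.inl i) u ∧ f u = f (Sum.inl i)} := by
      rintro _ ⟨j, hj, rfl⟩
      exact ⟨hadj i j, hS j (by simpa using hj)⟩
    have h1 : (Sum.inr '' (S : Set (Fin (2 * D + 1)))).ncard ≤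
        {u | (H2 D).Adj (Sum.inl i) u ∧ f u = f (Sum.inl i)}.ncard :=
      Set.ncard_le_ncard hsub (Set.toFinite _)
    have h2 : ((Sum.inr '' (S : Set (Fin (2 * D + 1)))) :
        Set (Fin 2 ⊕ Fin (2 * D + 1))).ncard = S.card := by
      rw [Set.ncard_image_of_injective _ Sum.inr_injective, Set.ncard_coe_finset]
    have h3 := hf (Sum.inl i)
    have h4 : (![D, D] : Fin 2 → ℕ) (f (Sum.inl i)) = D := by
      obtain ⟨n, hn⟩ := f (Sum.inl i)
      interval_cases n <;> simp
    omega
  have hAcard : A.card ≤ D := key 0 A (by intro j hj; simpa [hA] using hj)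
  have hBcard : B.card ≤ D := by
    refine key 1 B ?_
    intro j hj
    have hj' : ¬ f (Sum.inr j) = f (Sum.inl 0) := by simpa [hB] using hj
    exact hfin2 _ _ _ h hj'
  omega
end

section
/- For every nonnegative integer D and positive integer l, there exists a planar graph in which every cycle has length 4 or 2l+1 and which is not (D, D)-colorable. -/
open SimpleGraph

/-!
Give the vertex `v_{p+1}` of each copy height `2p`, and the middle vertices of the gadget on
`v_{i+1} v_{i+2}` height `2i + 1`. Every edge except the closing edges `v₁ v_{l+1}`
changes the height by one, and within a copy a vertex of even height is determined by its height.
Hence a path inside one copy that avoids closing edges never turns back, and its length is its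
height difference. A cycle through a closing edge therefore goes once around a copy (`2l + 1`),
and any other cycle runs from a middle vertex to the other end of its gadget and back (`4`).

The two ends of a gadget have `2D + 1` common neighbours, so a `(D, D)`-colouring gives them the
same colour; all `v_{l+1}` then share the colour of the hub, which has `D + 1` of them as
neighbours.

For planarity, take a minor model of a graph of minimum degree three. No branch set is a lone
middle vertex, so a branch set avoiding the hub lies in one copy and its vertices of even height
fill an interval of positions. Each neighbouring branch set must contain the vertex just below or
just above that interval: two candidates for three neighbours.
-/

namespace SimpleGraph

variable {V : Type*} {G : SimpleGraph V}

theorem Walk.intermediate_value (f : V → ℕ) {x y : V} (p : G.Walk x y)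
    (hf : ∀ u v, s(u, v) ∈ p.edges → (f u).dist (f v) ≤ 1) {k : ℕ}
    (hk₁ : min (f x) (f y) ≤ k) (hk₂ : k ≤ max (f x) (f y)) :
    ∃ v ∈ p.support, f v = k := by
  induction p with
  | @nil u => exact ⟨u, by simp, by omega⟩
  | @cons u w y h q ih =>
    by_cases hku : f u = k
    · exact ⟨u, by simp, hku⟩
    have hstep := hf u w (by simp)
    unfold Nat.dist at hstep
    obtain ⟨v, hv, hvk⟩ := ih (fun a b hab => hf a b (by simp [hab])) (by omega) (by omega)
    exact ⟨v, by simp [hv], hvk⟩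

theorem exists_walk_support_subset_of_preconnected_induce {s : Set V}
    (hs : (G.induce s).Preconnected) {x y : V} (hx : x ∈ s) (hy : y ∈ s) :
    ∃ p : G.Walk x y, ∀ v ∈ p.support, v ∈ s := by
  obtain ⟨p⟩ := hs ⟨x, hx⟩ ⟨y, hy⟩
  refine ⟨p.map (Embedding.induce s).toHom, fun v hv => ?_⟩
  have hv : v ∈ (p.map (Embedding.induce s).toHom).support := hv
  rw [Walk.support_map] at hv
  obtain ⟨⟨v, hvs⟩, -, rfl⟩ := List.mem_map.mp hv
  exact hvs

theorem exists_adj_mem_of_preconnected_induce {s : Set V} (hs : (G.induce s).Preconnected)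
    {x y : V} (hx : x ∈ s) (hy : y ∈ s) (hxy : x ≠ y) : ∃ u ∈ s, G.Adj x u := by
  obtain ⟨p, hp⟩ := exists_walk_support_subset_of_preconnected_induce hs hx hy
  cases p with
  | nil => exact absurd rfl hxy
  | cons h q => exact ⟨_, hp _ (by simp), h⟩

theorem Walk.IsCycle.eq_snd_or_eq_penultimate {u v : V} {c : G.Walk u u} (hc : c.IsCycle)
    (h : s(u, v) ∈ c.edges) : v = c.snd ∨ v = c.penultimate := by
  obtain ⟨w, huw, p, rfl⟩ := Walk.not_nil_iff.mp hc.not_nil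
  rw [Walk.edges_cons, List.mem_cons] at h
  rcases h with h | h
  · left
    rw [Walk.snd_cons]
    exact Sym2.congr_right.mp h
  · right
    have hp : ¬ p.Nil := Walk.edges_eq_nil.not.mp (List.ne_nil_of_mem h)
    rw [Walk.penultimate_cons_of_not_nil _ _ hp]
    exact ((Walk.cons_isCycle_iff p huw).mp hc).1.eq_penultimate_of_mem_edges h

theorem exists_three_adj_of_three_le_ncard_neighborSet {v : V}
    (h : 3 ≤ (G.neighborSet v).ncard) :
    ∃ a b c, G.Adj v a ∧ G.Adj v b ∧ G.Adj v c ∧ a ≠ b ∧ a ≠ c ∧ b ≠ c :=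
  (Set.two_lt_ncard_iff (Set.finite_of_ncard_pos (s := G.neighborSet v) (by omega))).mp h

theorem IsDefectiveColoring.ncard_le [Finite V] {k : ℕ} {d : Fin k → ℕ} {f : V → Fin k}
    (hf : G.IsDefectiveColoring d f) {v : V} {s : Set V}
    (hs : ∀ u ∈ s, G.Adj v u ∧ f u = f v) :
    s.ncard ≤ d (f v) :=
  (Set.ncard_le_ncard hs).trans (hf v)

theorem IsDefectiveColoring.eq_of_add_lt_card [Finite V] {d : Fin 2 → ℕ} {f : V → Fin 2}
    (hf : G.IsDefectiveColoring d f) {x y : V} {s : Finset V} (hs : ↑s ⊆ G.commonNeighbors x y)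
    (hcard : d (f x) + d (f y) < s.card) : f x = f y := by
  classical
  by_contra hne
  have hsplit : s ⊆ s.filter (f · = f x) ∪ s.filter (f · = f y) := by
    intro u hu
    have : f u = f x ∨ f u = f y := by omega
    simp [hu, this]
  have hx := hf.ncard_le (s := ↑(s.filter (f · = f x))) fun u hu => by
    simp only [Finset.coe_filter] at hu
    exact ⟨(hs hu.1).1, hu.2⟩
  have hy := hf.ncard_le (s := ↑(s.filter (f · = f y))) fun u hu => by
    simp only [Finset.coe_filter] at hu
    exact ⟨(hs hu.1).2, hu.2⟩
  rw [Set.ncard_coe_finset] at hx hy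
  have := (Finset.card_le_card hsplit).trans (Finset.card_union_le _ _)
  omega

end SimpleGraph

theorem Set.OrdConnected.eq_of_dist_eq_one {s : Set ℕ} (hs : s.OrdConnected) {x y m n : ℕ}
    (hx : x ∉ s) (hy : y ∉ s) (hm : m ∈ s) (hn : n ∈ s) (hxm : x.dist m = 1)
    (hyn : y.dist n = 1)
    (hside : x < m ↔ y < n) : x = y := by
  unfold Nat.dist at hxm hyn
  by_contra hne
  wlog hlt : x < y generalizing x y m n
  · exact this hy hx hn hm hyn hxm hside.symm (Ne.symm hne) (by omega)
  by_cases hxm' : x < m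
  · exact hy (hs.out hm hn ⟨by omega, by have := hside.mp hxm'; omega⟩)
  · exact hx (hs.out hm hn ⟨by omega, by have := mt hside.mpr hxm'; omega⟩)

theorem Set.OrdConnected.eq_or_eq_or_eq_of_dist_eq_one {s : Set ℕ} (hs : s.OrdConnected)
    {x y z : ℕ} (hx : x ∉ s ∧ ∃ m ∈ s, x.dist m = 1)
    (hy : y ∉ s ∧ ∃ m ∈ s, y.dist m = 1)
    (hz : z ∉ s ∧ ∃ m ∈ s, z.dist m = 1) : x = y ∨ x = z ∨ y = z := by
  obtain ⟨hx, m, hm, hxm⟩ := hx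
  obtain ⟨hy, n, hn, hyn⟩ := hy
  obtain ⟨hz, o, ho, hzo⟩ := hz
  by_cases h₁ : x < m <;> by_cases h₂ : y < n <;> by_cases h₃ : z < o
  all_goals first
    | exact Or.inl (hs.eq_of_dist_eq_one hx hy hm hn hxm hyn (by tauto))
    | exact Or.inr (Or.inl (hs.eq_of_dist_eq_one hx hz hm ho hxm hzo (by tauto)))
    | exact Or.inr (Or.inr (hs.eq_of_dist_eq_one hy hz hn ho hyn hzo (by tauto)))

namespace HGraph

/-- `hub` is the vertex `v₁` shared by the `D + 1` copies of `H₁(D, l; v₁)`, `node c i` is the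
vertex `v_{i+2}` of copy `c`, and `mid c i j` is the middle vertex of the `j`-th path of the
gadget `H₂(D; v_{i+1}, v_{i+2})` of copy `c`. -/
inductive Vertex (D l : ℕ) : Type
  | hub
  | node (c : Fin (D + 1)) (i : Fin l)
  | mid (c : Fin (D + 1)) (i : Fin l) (j : Fin (2 * D + 1))
  deriving DecidableEq, Fintype

open Vertex

variable {D l : ℕ}

/-- The vertex `v_{p+1}` of the cycle of copy `c`. Positions `0` and `l + 1` (and, as junk, all
larger ones) give the hub, so the closing edge `v_{l+1} v₁` joins positions `l` and `l + 1`. -/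
def cycleVert (c : Fin (D + 1)) (p : ℕ) : Vertex D l :=
  if h : 0 < p ∧ p ≤ l then node c ⟨p - 1, by omega⟩ else hub

def height : Vertex D l → ℕ
  | hub => 0
  | node _ i => 2 * (i + 1)
  | mid _ i _ => 2 * i + 1

def InCopy (c : Fin (D + 1)) : Vertex D l → Prop
  | hub => True
  | node c' _ => c' = c
  | mid c' _ _ => c' = c

def adjRel : Vertex D l → Vertex D l → Prop
  | mid c i _, v => v = cycleVert c i ∨ v = cycleVert c (i + 1)
  | hub, v => ∃ c, v = cycleVert c l
  | node _ _, _ => False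

def graph (D l : ℕ) : SimpleGraph (Vertex D l) := SimpleGraph.fromRel adjRel

def closingEdges (D l : ℕ) : Set (Sym2 (Vertex D l)) := Set.range fun c => s(hub, cycleVert c l)

@[simp] lemma cycleVert_zero (c : Fin (D + 1)) : cycleVert c 0 = (hub : Vertex D l) := by
  simp [cycleVert]

lemma cycleVert_of_lt {c : Fin (D + 1)} {p : ℕ} (hp : l < p) :
    cycleVert c p = (hub : Vertex D l) := by
  simp [cycleVert, show ¬ (0 < p ∧ p ≤ l) by omega]

lemma cycleVert_ne_mid {c c' : Fin (D + 1)} {p : ℕ} {i : Fin l} {j : Fin (2 * D + 1)} :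
    cycleVert c p ≠ mid c' i j := by
  unfold cycleVert
  split <;> simp

lemma le_of_cycleVert_ne_hub {c : Fin (D + 1)} {p : ℕ}
    (h : cycleVert c p ≠ (hub : Vertex D l)) : p ≤ l := by
  by_contra hp
  exact h (cycleVert_of_lt (by omega))

lemma height_cycleVert {c : Fin (D + 1)} {p : ℕ} (hp : p ≤ l) :
    height (cycleVert c p : Vertex D l) = 2 * p := by
  unfold cycleVert
  split
  · simp only [height]
    omega
  · simp only [height]
    omega

lemma inCopy_cycleVert (c : Fin (D + 1)) (p : ℕ) : InCopy c (cycleVert c p : Vertex D l) := by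
  unfold cycleVert
  split <;> simp [InCopy]

lemma inCopy_cycleVert_iff {c c' : Fin (D + 1)} {p : ℕ}
    (h : (cycleVert c' p : Vertex D l) ≠ hub) :
    InCopy c (cycleVert c' p : Vertex D l) ↔ c' = c := by
  by_cases hp : 0 < p ∧ p ≤ l
  · simp [cycleVert, hp, InCopy]
  · simp [cycleVert, hp] at h

lemma cycleVert_eq_of_inCopy {c c' : Fin (D + 1)} {p : ℕ}
    (h : InCopy c (cycleVert c' p : Vertex D l)) :
    (cycleVert c' p : Vertex D l) = cycleVert c p := by
  by_cases hp : 0 < p ∧ p ≤ l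
  · simp only [cycleVert, hp, and_self, dite_true, InCopy] at h ⊢
    rw [h]
  · simp [cycleVert, hp]

lemma exists_inCopy (v : Vertex D l) : ∃ c, InCopy c v := by
  cases v with
  | hub => exact ⟨0, trivial⟩
  | node c _ => exact ⟨c, rfl⟩
  | mid c _ _ => exact ⟨c, rfl⟩

lemma InCopy.eq_cycleVert {c : Fin (D + 1)} {v : Vertex D l} {p : ℕ} (hv : InCopy c v)
    (h : height v = 2 * p) : v = cycleVert c p := by
  cases v with
  | hub =>
    simp only [height] at h
    simp [show p = 0 by omega]
  | node c' i =>
    simp only [InCopy] at hv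
    simp only [height] at h
    subst hv
    simp only [cycleVert, show 0 < p ∧ p ≤ l by omega, and_self, dite_true]
    congr
    ext
    simp only
    omega
  | mid => simp only [height] at h; omega

lemma adj_mid_iff {c : Fin (D + 1)} {i : Fin l} {j : Fin (2 * D + 1)} {v : Vertex D l} :
    (graph D l).Adj (mid c i j) v ↔ v = cycleVert c i ∨ v = cycleVert c (i + 1) := by
  simp only [graph, SimpleGraph.fromRel_adj, adjRel]
  constructor
  · rintro ⟨-, h | h⟩
    · exact h
    · cases v <;> simp_all [cycleVert_ne_mid.symm]
  · rintro h
    refine ⟨?_, Or.inl h⟩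
    rintro rfl
    rcases h with h | h <;> exact cycleVert_ne_mid h.symm

lemma adj_cases {u v : Vertex D l} (h : (graph D l).Adj u v) :
    (∃ c i j, u = mid c i j ∧ (v = cycleVert c i ∨ v = cycleVert c (i + 1))) ∨
    (∃ c i j, v = mid c i j ∧ (u = cycleVert c i ∨ u = cycleVert c (i + 1))) ∨
    s(u, v) ∈ closingEdges D l := by
  obtain ⟨-, h | h⟩ := (SimpleGraph.fromRel_adj _ u v).mp h
  · cases u with
    | hub => obtain ⟨c, rfl⟩ := h; exact .inr (.inr ⟨c, rfl⟩)
    | node => exact h.elim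
    | mid c i j => exact .inl ⟨c, i, j, rfl, h⟩
  · cases v with
    | hub => obtain ⟨c, rfl⟩ := h; exact .inr (.inr ⟨c, Sym2.eq_swap⟩)
    | node => exact h.elim
    | mid c i j => exact .inr (.inl ⟨c, i, j, rfl, h⟩)

lemma notMem_closingEdges {u v : Vertex D l} (hu : u ≠ hub) (hv : v ≠ hub) :
    s(u, v) ∉ closingEdges D l := by
  rintro ⟨c, hc⟩
  rcases Sym2.eq_iff.mp hc with ⟨h, -⟩ | ⟨h, -⟩
  · exact hu h.symm
  · exact hv h.symm

lemma dist_height_of_adj {u v : Vertex D l} (h : (graph D l).Adj u v)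
    (hc : s(u, v) ∉ closingEdges D l) : (height u).dist (height v) = 1 := by
  rcases adj_cases h with ⟨c, i, j, rfl, rfl | rfl⟩ | ⟨c, i, j, rfl, rfl | rfl⟩ | h
  all_goals first
    | exact absurd h hc
    | rw [height_cycleVert (by have := i.isLt; omega)]
      simp only [height, Nat.dist]
      omega

lemma inCopy_iff_of_adj {c : Fin (D + 1)} {u v : Vertex D l} (h : (graph D l).Adj u v)
    (hu : u ≠ hub) (hv : v ≠ hub) : InCopy c u ↔ InCopy c v := by
  rcases adj_cases h with ⟨c', i, j, rfl, rfl | rfl⟩ | ⟨c', i, j, rfl, rfl | rfl⟩ | h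
  · rw [inCopy_cycleVert_iff hv]; rfl
  · rw [inCopy_cycleVert_iff hv]; rfl
  · rw [inCopy_cycleVert_iff hu]; rfl
  · rw [inCopy_cycleVert_iff hu]; rfl
  · exact absurd h (notMem_closingEdges hu hv)

lemma inCopy_of_adj_mid {c : Fin (D + 1)} {i : Fin l} {j : Fin (2 * D + 1)} {v : Vertex D l}
    (h : (graph D l).Adj (mid c i j) v) : InCopy c v := by
  rcases adj_mid_iff.mp h with rfl | rfl <;> exact inCopy_cycleVert c _

lemma height_of_adj_mid {c : Fin (D + 1)} {i : Fin l} {j : Fin (2 * D + 1)} {v : Vertex D l}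
    (h : (graph D l).Adj (mid c i j) v) : height v = 2 * i ∨ height v = 2 * i + 2 := by
  rcases adj_mid_iff.mp h with rfl | rfl
  · exact .inl (height_cycleVert i.isLt.le)
  · exact .inr (height_cycleVert i.isLt)

lemma inCopy_of_hub_notMem_support {c : Fin (D + 1)} {u v : Vertex D l}
    (p : (graph D l).Walk u v) (hp : hub ∉ p.support) (hu : InCopy c u) :
    ∀ x ∈ p.support, InCopy c x := by
  induction p with
  | nil => simpa using hu
  | @cons u w v h q ih =>
    simp only [Walk.support_cons, List.mem_cons, not_or] at hp
    have hw : InCopy c w :=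
      (inCopy_iff_of_adj h (Ne.symm hp.1) fun hw => hp.2 (hw ▸ q.start_mem_support)).mp hu
    simpa [hu] using ih hp.2 hw

lemma inCopy_of_isPath {c : Fin (D + 1)} {u v : Vertex D l} {p : (graph D l).Walk u v}
    (hp : p.IsPath) (hu : InCopy c u) (hv : InCopy c v) : ∀ x ∈ p.support, InCopy c x := by
  induction p with
  | nil => simpa using hu
  | @cons u w v h q ih =>
    have hw : InCopy c w := by
      by_cases hw : w = hub
      · subst hw; trivial
      by_cases hu' : u = hub
      · subst hu'
        have hq : hub ∉ q.support := ((Walk.cons_isPath_iff h q).mp hp).2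
        exact inCopy_of_hub_notMem_support q.reverse (by simpa using hq) hv w (by simp)
      · exact (inCopy_iff_of_adj h hu' hw).mp hu
    simpa [hu] using ih hp.of_cons hw hv

lemma length_eq_dist_height {c : Fin (D + 1)} :
    ∀ {x y : Vertex D l} (p : (graph D l).Walk x y), p.IsPath → (∀ v ∈ p.support, InCopy c v) →
    (∀ e ∈ p.edges, e ∉ closingEdges D l) →
    Even (height x) → Even (height y) → p.length = (height x).dist (height y)
  | _, _, .nil, _, _, _, _, _ => by simp [Nat.dist_self]
  | _, _, .cons h .nil, _, _, hc, ⟨a, ha⟩, ⟨b, hb⟩ => by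
    have := dist_height_of_adj h (hc _ (by simp))
    simp only [Nat.dist] at this
    omega
  | x, y, .cons (v := m) h₁ (.cons (v := x₂) h₂ r), hp, hcopy, hc, hx, hy => by
    have d₁ := dist_height_of_adj h₁ (hc _ (by simp))
    have d₂ := dist_height_of_adj h₂ (hc _ (by simp))
    obtain ⟨k, hk⟩ := hx
    have hxeq : x = cycleVert c k := (hcopy x (by simp)).eq_cycleVert (by omega)
    have hxr : x ∉ r.support := fun hxr => by
      simp_all [Walk.cons_isPath_iff]
    have hxx₂ : height x ≠ height x₂ := fun he => hxr <| by
      rw [hxeq, ← (hcopy x₂ (by simp)).eq_cycleVert (by omega)]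
      exact r.start_mem_support
    simp only [Nat.dist] at d₁ d₂
    have hx₂ : Even (height x₂) := ⟨height x₂ / 2, by omega⟩
    have ih := length_eq_dist_height r hp.of_cons.of_cons
      (fun v hv => hcopy v (by simp [hv])) (fun e he => hc e (by simp [he])) hx₂ hy
    -- otherwise `r` passes through the height of `x`, hence through `x` itself
    have hout :
        ¬ (min (height x₂) (height y) ≤ height x ∧ height x ≤ max (height x₂) (height y)) := by
      rintro ⟨h₁, h₂⟩
      obtain ⟨v, hv, hvx⟩ := r.intermediate_value height
        (fun u w he => (dist_height_of_adj (r.adj_of_mem_edges he) (hc _ (by simp [he]))).le)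
        h₁ h₂
      refine hxr ?_
      rwa [hxeq, ← (hcopy v (by simp [hv])).eq_cycleVert (by omega)]
    obtain ⟨b, hb⟩ := hy
    rw [Walk.length_cons, Walk.length_cons, ih]
    unfold Nat.dist
    omega

lemma exists_eq_mid_of_not_even {v : Vertex D l} (hv : ¬ Even (height v)) :
    ∃ c i j, v = mid c i j := by
  cases v with
  | hub => exact absurd ⟨0, rfl⟩ hv
  | node c i => exact absurd ⟨i + 1, by simp only [height]; ring⟩ hv
  | mid c i j => exact ⟨c, i, j, rfl⟩

lemma length_eq_four_of_isCycle {c : Fin (D + 1)} {i : Fin l} {j : Fin (2 * D + 1)}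
    {w : (graph D l).Walk (mid c i j) (mid c i j)} (hw : w.IsCycle)
    (hc : ∀ e ∈ w.edges, e ∉ closingEdges D l) : w.length = 4 := by
  have hnil : ¬ w.Nil := hw.not_nil
  have hlen := hw.three_le_length
  have htail : ¬ w.tail.Nil := by
    rw [Walk.not_nil_iff_lt_length, Walk.length_tail]
    omega
  have hpen : w.penultimate = w.tail.penultimate := by
    conv_lhs => rw [← w.cons_tail_eq hnil]
    exact Walk.penultimate_cons_of_not_nil _ _ htail
  have hab : w.snd ≠ w.tail.penultimate := hpen ▸ hw.snd_ne_penultimate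
  have ha := w.adj_snd hnil
  have hb := (w.tail.adj_penultimate htail).symm
  have hha := height_of_adj_mid ha
  have hhb := height_of_adj_mid hb
  have hne : height w.snd ≠ height w.tail.penultimate := fun he => hab <|
    ((inCopy_of_adj_mid ha).eq_cycleVert (p := height w.snd / 2) (by omega)).trans
      ((inCopy_of_adj_mid hb).eq_cycleVert (p := height w.snd / 2) (by omega)).symm
  have hsub : ∀ e ∈ w.tail.dropLast.edges, e ∈ w.edges := fun e he => by
    rw [Walk.edges_dropLast, Walk.edges_tail] at he
    exact List.mem_of_mem_tail (List.mem_of_mem_dropLast he)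
  have hq := length_eq_dist_height w.tail.dropLast hw.isPath_tail.dropLast
    (inCopy_of_isPath hw.isPath_tail.dropLast (inCopy_of_adj_mid ha) (inCopy_of_adj_mid hb))
    (fun e he => hc e (hsub e he)) ⟨height w.snd / 2, by omega⟩
    ⟨height w.tail.penultimate / 2, by omega⟩
  rw [Nat.dist] at hq
  rw [← Walk.length_tail_add_one hnil, ← Walk.length_dropLast_add_one htail, hq]
  omega

lemma length_eq_of_isCycle_of_snd_eq {c : Fin (D + 1)} {w : (graph D l).Walk hub hub}
    (hw : w.IsCycle) (hs : w.snd = cycleVert c l) : w.length = 2 * l + 1 := by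
  have hnil : ¬ w.Nil := hw.not_nil
  have hp := hw.isPath_tail
  have hcopy := inCopy_of_isPath (c := c) hp (hs ▸ inCopy_cycleVert c l) trivial
  have hfirst : s(hub, w.snd) ∉ w.tail.edges := by
    have hw' := hw
    rw [← w.cons_tail_eq hnil] at hw'
    exact ((Walk.cons_isCycle_iff _ _).mp hw').2
  have hc : ∀ e ∈ w.tail.edges, e ∉ closingEdges D l := by
    rintro e he ⟨c', rfl⟩
    simp only at he
    have hmem : w.tail.penultimate ∈ w.tail.support := w.tail.getVert_mem_support _
    rw [← hp.eq_penultimate_of_mem_edges he] at hmem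
    have := cycleVert_eq_of_inCopy (hcopy _ hmem)
    rw [this, ← hs] at he
    exact hfirst he
  have hh : height w.snd = 2 * l := by rw [hs, height_cycleVert le_rfl]
  have hlen := length_eq_dist_height w.tail hp hcopy hc ⟨l, by omega⟩ ⟨0, rfl⟩
  rw [hh] at hlen
  rw [← Walk.length_tail_add_one hnil, hlen]
  simp [height, Nat.dist]

theorem length_of_isCycle {v : Vertex D l} (w : (graph D l).Walk v v) (hw : w.IsCycle) :
    w.length = 4 ∨ w.length = 2 * l + 1 := by
  by_cases h : ∃ e ∈ w.edges, e ∈ closingEdges D l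
  · right
    obtain ⟨_, he, c, rfl⟩ := h
    have hhub : hub ∈ w.support := w.fst_mem_support_of_mem_edges he
    have hw' := hw.rotate hhub
    have he' := (w.rotate_edges _ hhub).perm.mem_iff.mpr he
    rw [← w.length_rotate _ hhub]
    rcases hw'.eq_snd_or_eq_penultimate he' with hs | hs
    · exact length_eq_of_isCycle_of_snd_eq hw' hs.symm
    · rw [← Walk.length_reverse]
      exact length_eq_of_isCycle_of_snd_eq hw'.reverse (by rw [Walk.snd_reverse]; exact hs.symm)
  · left
    simp only [not_exists, not_and] at h
    obtain ⟨m, hm, c, i, j, rfl⟩ : ∃ m ∈ w.support, ∃ c i j, m = mid c i j := by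
      have hd := dist_height_of_adj (w.adj_snd hw.not_nil)
        (h _ (w.mk_start_snd_mem_edges hw.not_nil))
      by_cases hv : Even (height v)
      · refine ⟨w.snd, w.getVert_mem_support 1, exists_eq_mid_of_not_even ?_⟩
        rintro ⟨a, ha⟩
        obtain ⟨b, hb⟩ := hv
        simp only [Nat.dist] at hd
        omega
      · exact ⟨v, w.start_mem_support, exists_eq_mid_of_not_even hv⟩
    rw [← w.length_rotate _ hm]
    exact length_eq_four_of_isCycle (hw.rotate hm)
      fun e he => h e ((w.rotate_edges _ hm).perm.mem_iff.mp he)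

lemma adj_hub_cycleVert (hl : 1 ≤ l) (c : Fin (D + 1)) : (graph D l).Adj hub (cycleVert c l) := by
  refine (SimpleGraph.fromRel_adj _ _ _).mpr ⟨?_, .inl ⟨c, rfl⟩⟩
  simp [cycleVert, show 0 < l by omega]

lemma cycleVert_injective (hl : 1 ≤ l) :
    Function.Injective fun c : Fin (D + 1) => (cycleVert c l : Vertex D l) := by
  intro c c' h
  simpa [cycleVert, show 0 < l by omega] using h

theorem not_defectiveColorable (hl : 1 ≤ l) : ¬ (graph D l).DefectiveColorable ![D, D] := by
  rintro ⟨f, hf⟩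
  have hD : ∀ t : Fin 2, ![D, D] t = D := by
    intro t
    fin_cases t <;> rfl
  have hstep : ∀ c (i : Fin l), f (cycleVert c i) = f (cycleVert c (i + 1)) := by
    intro c i
    refine hf.eq_of_add_lt_card (s := Finset.univ.image (mid c i)) ?_ ?_
    · intro v hv
      obtain ⟨j, -, rfl⟩ := Finset.mem_image.mp hv
      exact ⟨(adj_mid_iff.mpr (.inl rfl)).symm, (adj_mid_iff.mpr (.inr rfl)).symm⟩
    · rw [Finset.card_image_of_injective _ fun j j' h => by cases h; rfl, Finset.card_univ,
        Fintype.card_fin, hD, hD]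
      omega
  have hhub : ∀ c p, p ≤ l → f (cycleVert c p) = f hub := by
    intro c p
    induction p with
    | zero => simp
    | succ p ih =>
      intro hp
      rw [← hstep c ⟨p, hp⟩]
      exact ih (by omega)
  have hcard := hf.ncard_le (v := hub) (s := Set.range fun c => cycleVert c l) <| by
    rintro _ ⟨c, rfl⟩
    exact ⟨adj_hub_cycleVert hl c, hhub c l le_rfl⟩
  rw [Set.ncard_range_of_injective (cycleVert_injective hl), hD, Nat.card_eq_fintype_card,
    Fintype.card_fin] at hcard
  omega

lemma ordConnected_setOf_cycleVert_mem {S : Set (Vertex D l)}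
    (hS : ((graph D l).induce S).Preconnected) (hhub : hub ∉ S) (c : Fin (D + 1)) :
    {p | cycleVert c p ∈ S}.OrdConnected := by
  refine ⟨fun p hp q hq k ⟨hpk, hkq⟩ => ?_⟩
  obtain ⟨w, hw⟩ := exists_walk_support_subset_of_preconnected_induce hS hp hq
  have hne : ∀ x ∈ w.support, x ≠ hub := fun x hx h => hhub (h ▸ hw x hx)
  have hp' := height_cycleVert (c := c) (le_of_cycleVert_ne_hub (hne _ w.start_mem_support))
  have hq' := height_cycleVert (c := c) (le_of_cycleVert_ne_hub (hne _ w.end_mem_support))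
  obtain ⟨v, hv, hvk⟩ := w.intermediate_value height
    (fun x y he => (dist_height_of_adj (w.adj_of_mem_edges he) (notMem_closingEdges
      (hne _ (w.fst_mem_support_of_mem_edges he)) (hne _ (w.snd_mem_support_of_mem_edges he)))).le)
    (k := 2 * k) (by rw [hp', hq']; omega) (by rw [hp', hq']; omega)
  have hvc := inCopy_of_hub_notMem_support w (fun h => hne _ h rfl) (inCopy_cycleVert c p) v hv
  show cycleVert c k ∈ S
  rw [← hvc.eq_cycleVert hvk]
  exact hw v hv

lemma exists_inCopy_of_hub_notMem {S : Set (Vertex D l)}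
    (hS : ((graph D l).induce S).Preconnected) (hne : S.Nonempty) (hhub : hub ∉ S) :
    ∃ c, ∀ v ∈ S, InCopy c v := by
  obtain ⟨z, hz⟩ := hne
  obtain ⟨c, hc⟩ := exists_inCopy z
  refine ⟨c, fun v hv => ?_⟩
  obtain ⟨p, hp⟩ := exists_walk_support_subset_of_preconnected_induce hS hz hv
  exact inCopy_of_hub_notMem_support p (fun h => hhub (hp _ h)) hc v p.end_mem_support

lemma exists_cycleVert_mem_of_adj {S S' : Set (Vertex D l)} {c : Fin (D + 1)} (hhub : hub ∉ S)
    (hcopy : ∀ v ∈ S, InCopy c v)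
    (hmid : ∀ c i j, mid c i j ∈ S → ∃ u ∈ S, (graph D l).Adj (mid c i j) u)
    (hmid' : ∀ c i j, mid c i j ∈ S' → ∃ u ∈ S', (graph D l).Adj (mid c i j) u)
    (hdisj : Disjoint S S') {a b : Vertex D l} (ha : a ∈ S) (hb : b ∈ S')
    (hab : (graph D l).Adj a b) :
    ∃ k m, cycleVert c k ∈ S' ∧ cycleVert c m ∈ S ∧ k.dist m = 1 := by
  have hsep : ∀ v ∈ S, v ∉ S' := fun v hv => Set.disjoint_left.mp hdisj hv
  have ha' : a ≠ hub := fun h => hhub (h ▸ ha)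
  rcases adj_cases hab with ⟨c', i, j, rfl, hb'⟩ | ⟨c', i, j, rfl, ha''⟩ | ⟨c', hc⟩
  · obtain rfl : c' = c := hcopy _ ha
    obtain ⟨u, hu, hau⟩ := hmid c' i j ha
    rcases adj_mid_iff.mp hau with rfl | rfl <;> rcases hb' with rfl | rfl
    · exact absurd hb (hsep _ hu)
    · exact ⟨i + 1, i, hb, hu, by simp [Nat.dist]⟩
    · exact ⟨i, i + 1, hb, hu, by simp [Nat.dist]⟩
    · exact absurd hb (hsep _ hu)
  · obtain rfl : c' = c := (inCopy_iff_of_adj hab ha' (by simp)).mp (hcopy a ha)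
    obtain ⟨u, hu, hbu⟩ := hmid' c' i j hb
    rcases adj_mid_iff.mp hbu with rfl | rfl <;> rcases ha'' with rfl | rfl
    · exact absurd hu (hsep _ ha)
    · exact ⟨i, i + 1, hu, ha, by simp [Nat.dist]⟩
    · exact ⟨i + 1, i, hu, ha, by simp [Nat.dist]⟩
    · exact absurd hu (hsep _ ha)
  · rcases Sym2.eq_iff.mp hc with ⟨h, -⟩ | ⟨h, rfl⟩
    · exact absurd h.symm ha'
    · subst h
      refine ⟨l + 1, l, by rwa [cycleVert_of_lt (by omega)], ?_, by simp [Nat.dist]⟩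
      rwa [← cycleVert_eq_of_inCopy (hcopy _ ha)]

lemma exists_adj_mem_of_mid_mem {W : Type*} {H : SimpleGraph W} {B : W → Set (Vertex D l)}
    (hH : ∀ w, 3 ≤ (H.neighborSet w).ncard)
    (hconn : ∀ w, ((graph D l).induce (B w)).Connected)
    (hdisj : ∀ w w', w ≠ w' → Disjoint (B w) (B w'))
    (hadj : ∀ w w', H.Adj w w' → ∃ a ∈ B w, ∃ b ∈ B w', (graph D l).Adj a b)
    (w : W) (c : Fin (D + 1)) (i : Fin l) (j : Fin (2 * D + 1)) (hm : mid c i j ∈ B w) :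
    ∃ u ∈ B w, (graph D l).Adj (mid c i j) u := by
  by_contra hno
  have hsingle : ∀ u ∈ B w, u = mid c i j := fun u hu => by
    by_contra hne
    exact hno (exists_adj_mem_of_preconnected_induce (hconn w).preconnected hm hu (Ne.symm hne))
  have hnbr :
      ∀ w', H.Adj w w' → ∃ b ∈ B w', b = cycleVert c i ∨ b = cycleVert c (i + 1) := by
    intro w' h'
    obtain ⟨a, ha, b, hb, hab⟩ := hadj w w' h'
    rw [hsingle a ha] at hab
    exact ⟨b, hb, adj_mid_iff.mp hab⟩
  have hsep : ∀ {x y}, x ≠ y → ∀ {v}, v ∈ B x → v ∉ B y :=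
    fun h _ hx hy => Set.disjoint_left.mp (hdisj _ _ h) hx hy
  obtain ⟨w₁, w₂, w₃, h₁, h₂, h₃, h₁₂, h₁₃, h₂₃⟩ :=
    exists_three_adj_of_three_le_ncard_neighborSet (hH w)
  obtain ⟨b₁, hb₁, e₁⟩ := hnbr w₁ h₁
  obtain ⟨b₂, hb₂, e₂⟩ := hnbr w₂ h₂
  obtain ⟨b₃, hb₃, e₃⟩ := hnbr w₃ h₃
  rcases e₁ with rfl | rfl <;> rcases e₂ with rfl | rfl <;> rcases e₃ with rfl | rfl
  all_goals first
    | exact hsep h₁₂ hb₁ hb₂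
    | exact hsep h₁₃ hb₁ hb₃
    | exact hsep h₂₃ hb₂ hb₃

theorem not_isMinor {W : Type*} [Nonempty W] (H : SimpleGraph W)
    (hH : ∀ w, 3 ≤ (H.neighborSet w).ncard) : ¬ H.IsMinor (graph D l) := by
  rintro ⟨B, hne, hconn, hdisj, hadj⟩
  have hmid := exists_adj_mem_of_mid_mem hH hconn hdisj hadj
  have hsep : ∀ {x y}, x ≠ y → ∀ {v}, v ∈ B x → v ∉ B y :=
    fun h _ hx hy => Set.disjoint_left.mp (hdisj _ _ h) hx hy
  have hnbrs := fun w => exists_three_adj_of_three_le_ncard_neighborSet (hH w)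
  obtain ⟨w, hw⟩ : ∃ w, hub ∉ B w := by
    obtain ⟨w₀⟩ := ‹Nonempty W›
    obtain ⟨w₁, -, -, h₁, -⟩ := hnbrs w₀
    by_cases h : hub ∈ B w₀
    · exact ⟨w₁, hsep (H.ne_of_adj h₁) h⟩
    · exact ⟨w₀, h⟩
  obtain ⟨c, hcopy⟩ := exists_inCopy_of_hub_notMem (hconn w).preconnected (hne w) hw
  set P := {p | cycleVert c p ∈ B w}
  have hexit : ∀ w', H.Adj w w' → ∃ k, cycleVert c k ∈ B w' ∧ (k ∉ P ∧ ∃ m ∈ P, k.dist m = 1) := by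
    intro w' h'
    obtain ⟨a, ha, b, hb, hab⟩ := hadj w w' h'
    obtain ⟨k, m, hk, hm, hkm⟩ := exists_cycleVert_mem_of_adj hw hcopy (hmid w) (hmid w')
      (hdisj _ _ (H.ne_of_adj h')) ha hb hab
    exact ⟨k, hk, hsep (H.ne_of_adj h').symm hk, m, hm, hkm⟩
  obtain ⟨w₁, w₂, w₃, h₁, h₂, h₃, h₁₂, h₁₃, h₂₃⟩ := hnbrs w
  obtain ⟨k₁, hk₁, e₁⟩ := hexit w₁ h₁
  obtain ⟨k₂, hk₂, e₂⟩ := hexit w₂ h₂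
  obtain ⟨k₃, hk₃, e₃⟩ := hexit w₃ h₃
  have hP : P.OrdConnected := ordConnected_setOf_cycleVert_mem (hconn w).preconnected hw c
  rcases hP.eq_or_eq_or_eq_of_dist_eq_one e₁ e₂ e₃ with rfl | rfl | rfl
  · exact hsep h₁₂ hk₁ hk₂
  · exact hsep h₁₃ hk₁ hk₃
  · exact hsep h₂₃ hk₂ hk₃

theorem planar : (graph D l).Planar := by
  refine ⟨not_isMinor _ fun w => ?_, not_isMinor _ fun w => ?_⟩
  · refine (Set.two_lt_ncard_iff (Set.toFinite _)).mpr ?_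
    simp only [mem_neighborSet, completeGraph, top_adj]
    revert w
    decide
  · refine (Set.two_lt_ncard_iff (Set.toFinite _)).mpr ?_
    simp only [mem_neighborSet, completeBipartiteGraph_adj]
    revert w
    decide

end HGraph

theorem stmt1 (D l : ℕ) (hl : 1 ≤ l) :
    ∃ (V : Type) (_ : Fintype V) (G : SimpleGraph V), G.Planar ∧
      (∀ (v : V) (w : G.Walk v v), w.IsCycle → w.length = 4 ∨ w.length = 2 * l + 1) ∧
      ¬ G.DefectiveColorable ![D, D] :=
  ⟨HGraph.Vertex D l, inferInstance, HGraph.graph D l, HGraph.planar,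
    fun _ w hw => HGraph.length_of_isCycle w hw, HGraph.not_defectiveColorable hl⟩
end

section
/- For any nonnegative integer D, let F1(D; x, y) be the graph consisting of 2D+1 internally disjoint paths of length 3 between vertices x and y. Then in any (0, D)-coloring of F1(D; x, y), it is not the case that both x and y receive the second color (the color whose class may induce maximum degree up to D). -/
open SimpleGraph

/-- `F1 D`: the graph with vertices `x = Sum.inl 0`, `y = Sum.inl 1` joined by
`2D+1` internally disjoint paths of length 3, the `i`-th path having internal
vertices `Sum.inr (i, 0)` and `Sum.inr (i, 1)`. -/
def F1 (D : ℕ) : SimpleGraph (Fin 2 ⊕ (Fin (2 * D + 1) × Fin 2)) :=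
  SimpleGraph.fromRel (fun a b =>
    (a = Sum.inl 0 ∧ ∃ i, b = Sum.inr (i, 0)) ∨
    (∃ i, a = Sum.inr (i, 0) ∧ b = Sum.inr (i, 1)) ∨
    (∃ i, a = Sum.inr (i, 1) ∧ b = Sum.inl 1))

theorem stmt2 (D : ℕ) (f : Fin 2 ⊕ (Fin (2 * D + 1) × Fin 2) → Fin 2)
    (hf : (F1 D).IsDefectiveColoring ![0, D] f) :
    ¬ (f (Sum.inl 0) = 1 ∧ f (Sum.inl 1) = 1) := by
  rintro ⟨hx, hy⟩
  have adj0 : ∀ i : Fin (2*D+1), (F1 D).Adj (Sum.inl 0) (Sum.inr (i, 0)) := by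
    intro i
    simp [F1, SimpleGraph.fromRel_adj]
  have adj1 : ∀ i : Fin (2*D+1), (F1 D).Adj (Sum.inl 1) (Sum.inr (i, 1)) := by
    intro i
    simp [F1, SimpleGraph.fromRel_adj]
  have adjm : ∀ i : Fin (2*D+1), (F1 D).Adj (Sum.inr (i, 0)) (Sum.inr (i, 1)) := by
    intro i
    simp [F1, SimpleGraph.fromRel_adj]
  set A : Set (Fin (2*D+1)) := {i | f (Sum.inr (i, 0)) = 1} with hA
  set B : Set (Fin (2*D+1)) := {i | f (Sum.inr (i, 1)) = 1} with hB
  have key : ∀ (j : Fin 2) (S : Set (Fin (2*D+1))), S = {i | f (Sum.inr (i, j)) = 1} →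
      (∀ i : Fin (2*D+1), (F1 D).Adj (Sum.inl j) (Sum.inr (i, j))) →
      f (Sum.inl j) = 1 → S.ncard ≤ D := by
    intro j S hS hadj hj
    have hinj : Set.InjOn (fun i : Fin (2*D+1) => (Sum.inr (i, j) : Fin 2 ⊕ (Fin (2*D+1) × Fin 2))) S := by
      intro a _ b _ h
      simpa using h
    have hsub : (fun i : Fin (2*D+1) => (Sum.inr (i, j) : Fin 2 ⊕ (Fin (2*D+1) × Fin 2))) '' S ⊆
        {u | (F1 D).Adj (Sum.inl j) u ∧ f u = f (Sum.inl j)} := by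
      rintro _ ⟨i, hi, rfl⟩
      rw [hS] at hi
      exact ⟨hadj i, by rw [hi, hj]⟩
    have h1 : S.ncard ≤ {u | (F1 D).Adj (Sum.inl j) u ∧ f u = f (Sum.inl j)}.ncard := by
      rw [← Set.ncard_image_of_injOn hinj]
      exact Set.ncard_le_ncard hsub (Set.toFinite _)
    have h2 := hf (Sum.inl j)
    rw [hj] at h1 h2
    simpa using h1.trans h2
  have hAcard : A.ncard ≤ D := key 0 A hA adj0 hx
  have hBcard : B.ncard ≤ D := key 1 B hB adj1 hy
  have hex : ∃ i : Fin (2*D+1), i ∉ A ∪ B := by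
    by_contra h
    push_neg at h
    have huniv : A ∪ B = Set.univ := Set.eq_univ_of_forall h
    have := Set.ncard_union_le A B
    rw [huniv, Set.ncard_univ] at this
    simp at this
    omega
  obtain ⟨i, hi⟩ := hex
  simp only [Set.mem_union, hA, hB, Set.mem_setOf_eq, not_or] at hi
  have two : ∀ a : Fin 2, a ≠ 1 → a = 0 := by decide
  have h0 : f (Sum.inr (i, 0)) = 0 := two _ hi.1
  have h1 : f (Sum.inr (i, 1)) = 0 := two _ hi.2
  have h2 := hf (Sum.inr (i, 0))
  rw [h0] at h2
  simp only [Matrix.cons_val_zero, Nat.le_zero] at h2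
  rw [Set.ncard_eq_zero (Set.toFinite _)] at h2
  have : Sum.inr (i, 1) ∈ {u | (F1 D).Adj (Sum.inr (i, 0)) u ∧ f u = 0} :=
    ⟨adjm i, h1⟩
  rw [h2] at this
  exact this
end

section
/- For every nonnegative integer D, there exists a planar graph all of whose cycles have length 3 that is not (0, D)-colorable. -/
open SimpleGraph

/-!
In a `(0, D)`-colouring the two non-central vertices of a triangle of `T₀(D; x)` are adjacent, so
one of them lies in the defective class; if `x` were in that class it would have `D + 1` neighbours
there. Hence both centres lie in the independent class, yet they are adjacent.

Every vertex other than the two centres has degree 2 and forms a triangle with the centre and a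
second vertex of degree 2, so a cycle, which cannot live on the two centres alone, is such a
triangle.

For planarity (in Wagner's form), let `H` be a minor of minimum degree at least 3. Of any three
branch sets one avoids both centres; being connected it lies inside a single triangle, whose three
vertices would have to meet the at least four disjoint branch sets of that vertex and its
neighbours.
-/

open Finset Function

namespace SimpleGraph

variable {V W : Type*} {G : SimpleGraph V}

theorem Reachable.apply_eq_of_forall_adj {α : Type*} {φ : V → α}
    (h : ∀ x y, G.Adj x y → φ x = φ y) {u v : V} (huv : G.Reachable u v) : φ u = φ v := by
  obtain ⟨p⟩ := huv
  induction p with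
  | nil => rfl
  | cons hadj _ ih => exact (h _ _ hadj).trans ih

theorem Walk.IsPath.length_eq_one_of_forall_adj {u v w : V} {p : G.Walk u v} (hp : p.IsPath)
    (huv : u ≠ v) (hu : ∀ z, G.Adj u z → z = w ∨ z = v) (hw : w ∉ p.support) :
    p.length = 1 := by
  cases p with
  | nil => exact absurd rfl huv
  | cons h q =>
    rcases hu _ h with rfl | rfl
    · exact absurd (List.mem_cons_of_mem _ q.start_mem_support) hw
    · simp [Walk.isPath_iff_nil.mp ((Walk.cons_isPath_iff h q).mp hp).1]

theorem Walk.IsCycle.length_eq_three_of_forall_adj {u a b : V} {c : G.Walk u u}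
    (hc : c.IsCycle) (hu : ∀ z, G.Adj u z → z = a ∨ z = b)
    (ha : ∀ z, G.Adj a z → z = u ∨ z = b) : c.length = 3 := by
  have h3 := hc.three_le_length
  cases c with
  | nil => exact absurd rfl hc.ne_nil
  | cons hx p =>
    rename_i x
    obtain ⟨y, hy, r, hpr⟩ := Walk.exists_eq_cons_of_ne hx.ne p.reverse
    have hlen : p.length = r.length + 1 := by
      rw [← Walk.length_reverse p, hpr, Walk.length_cons]
    obtain ⟨hr, hur⟩ : r.IsPath ∧ u ∉ r.support := by
      rw [← Walk.cons_isPath_iff hy r, ← hpr]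
      exact ((Walk.cons_isCycle_iff _ _).mp hc).1.reverse
    have hyx : y ≠ x := by
      rintro rfl
      rw [(Walk.isPath_iff_nil.mp hr).length_eq_zero] at hlen
      simp [hlen] at h3
    suffices r.length = 1 by simp [hlen, this]
    rcases hu x hx with rfl | rfl <;> rcases hu y hy with rfl | rfl
    · exact absurd rfl hyx
    · simpa using hr.reverse.length_eq_one_of_forall_adj hyx.symm ha (by simpa using hur)
    · exact hr.length_eq_one_of_forall_adj hyx ha hur
    · exact absurd rfl hyx

theorem Walk.IsCycle.length_eq_three_of_mem_support {v u a b : V} {c : G.Walk v v}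
    (hc : c.IsCycle) (hmem : u ∈ c.support) (hu : ∀ z, G.Adj u z → z = a ∨ z = b)
    (ha : ∀ z, G.Adj a z → z = u ∨ z = b) : c.length = 3 := by
  classical
  simpa using (hc.rotate hmem).length_eq_three_of_forall_adj hu ha

theorem IsDefectiveColoring.ne_of_adj [Finite V] {k : ℕ} {d : Fin k → ℕ} {f : V → Fin k}
    (hf : G.IsDefectiveColoring d f) {c : Fin k} (hc : d c = 0) {u v : V} (huv : G.Adj u v)
    (hu : f u = c) : f v ≠ c := by
  intro hv
  have hempty := hf u
  rw [hu, hc, Nat.le_zero, Set.ncard_eq_zero] at hempty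
  exact (Set.eq_empty_iff_forall_notMem.mp hempty) v ⟨huv, hv⟩

-- The disjoint branch sets of `w` and of its `H`-neighbours all meet `S`.
theorem card_lt_of_branchSets {H : SimpleGraph W} (f : W → Set V)
    (hne : ∀ w, (f w).Nonempty) (hdisj : Pairwise (Disjoint on f))
    (hedge : ∀ w w', H.Adj w w' → ∃ a ∈ f w, ∃ b ∈ f w', G.Adj a b)
    {w : W} {t : Finset W} (ht : ∀ w' ∈ t, H.Adj w w') {S : Finset V} (hwS : f w ⊆ S)
    (hS : ∀ a ∈ f w, ∀ b, G.Adj a b → b ∈ S) : #t < #S := by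
  classical
  let trace (w' : W) : Finset V := {x ∈ S | x ∈ f w'}
  have hw : w ∉ t := fun h => (ht w h).ne rfl
  have htrace : ∀ w' ∈ insert w t, (trace w').Nonempty := by
    intro w' hw'
    rcases mem_insert.mp hw' with rfl | hw'
    · obtain ⟨x, hx⟩ := hne w'
      exact ⟨x, mem_filter.mpr ⟨hwS hx, hx⟩⟩
    · obtain ⟨a, ha, x, hx, hax⟩ := hedge w w' (ht w' hw')
      exact ⟨x, mem_filter.mpr ⟨hS a ha x hax, hx⟩⟩
  have hpair : ((insert w t : Finset W) : Set W).PairwiseDisjoint trace :=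
    fun _ _ _ _ h => disjoint_filter.mpr fun _ _ hx => Set.disjoint_left.mp (hdisj h) hx
  calc #t < #(insert w t) := by rw [card_insert_of_notMem hw]; omega
    _ ≤ #((insert w t).biUnion trace) := card_le_card_biUnion hpair htrace
    _ ≤ #S := card_le_card (biUnion_subset.mpr fun _ _ => filter_subset _ _)

end SimpleGraph

/-- The vertices of `T(D)`: `(s, none)` is the vertex `x` of the copy `s` of `T₀(D; x)`, and
`(s, some (i, false))`, `(s, some (i, true))` are the other two vertices of its `i`-th triangle. -/
abbrev TVertex (D : ℕ) : Type := Bool × Option (Fin (D + 1) × Bool)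

def tGraph (D : ℕ) : SimpleGraph (TVertex D) where
  Adj
    | (s, none), (t, none) => s ≠ t
    | (s, none), (t, some _) | (s, some _), (t, none) => s = t
    | (s, some (i, b)), (t, some (j, c)) => s = t ∧ i = j ∧ b ≠ c
  symm := ⟨by rintro ⟨s, _ | ⟨i, b⟩⟩ ⟨t, _ | ⟨j, c⟩⟩ <;> simp_all <;> tauto⟩
  loopless := ⟨by rintro ⟨s, _ | ⟨i, b⟩⟩ <;> simp⟩

namespace TGraph

variable {D : ℕ}

theorem adj_centres : (tGraph D).Adj (false, none) (true, none) := by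
  simp [tGraph]

theorem adj_centre_some (s : Bool) (i : Fin (D + 1)) (b : Bool) :
    (tGraph D).Adj (s, none) (s, some (i, b)) := by
  simp [tGraph]

theorem adj_some_iff {s : Bool} {i : Fin (D + 1)} {b : Bool} {z : TVertex D} :
    (tGraph D).Adj (s, some (i, b)) z ↔ z = (s, none) ∨ z = (s, some (i, !b)) := by
  obtain ⟨t, _ | ⟨j, c⟩⟩ := z <;>
    simp [tGraph, Prod.ext_iff, eq_comm, Bool.eq_not_iff]

theorem centre_color_eq_zero {f : TVertex D → Fin 2}
    (hf : (tGraph D).IsDefectiveColoring ![0, D] f) (s : Bool) : f (s, none) = 0 := by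
  by_contra h0
  have h1 : f (s, none) = 1 := Fin.eq_one_of_ne_zero _ h0
  have hone : ∀ i, ∃ b, f (s, some (i, b)) = 1 := fun i => by
    by_contra! h
    have hfalse : f (s, some (i, false)) = 0 := by have := h false; omega
    have htrue : f (s, some (i, true)) = 0 := by have := h true; omega
    exact hf.ne_of_adj rfl (adj_some_iff.mpr (.inr rfl)) hfalse htrue
  choose b hb using hone
  have hinj : Injective fun i => ((s, some (i, b i)) : TVertex D) := fun i j h => by
    simp only [Prod.mk.injEq, Option.some.injEq] at h
    exact h.2.1
  have hrange : Set.range (fun i => ((s, some (i, b i)) : TVertex D)) ⊆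
      {u | (tGraph D).Adj (s, none) u ∧ f u = f (s, none)} := by
    rintro _ ⟨i, rfl⟩
    exact ⟨adj_centre_some s i (b i), (hb i).trans h1.symm⟩
  have hle := (Set.ncard_le_ncard hrange).trans (hf (s, none))
  rw [Set.ncard_range_of_injective hinj, h1] at hle
  simp at hle

theorem not_defectiveColorable : ¬ (tGraph D).DefectiveColorable ![0, D] := by
  rintro ⟨f, hf⟩
  exact hf.ne_of_adj rfl adj_centres (centre_color_eq_zero hf false) (centre_color_eq_zero hf true)

theorem exists_mem_support_isSome {v : TVertex D} {c : (tGraph D).Walk v v} (hc : c.IsCycle) :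
    ∃ u ∈ c.support, u.2.isSome := by
  by_contra! h
  have hnodup : (c.support.tail.map Prod.fst).Nodup := by
    refine hc.support_nodup.map_on fun x hx y hy hxy => Prod.ext hxy ?_
    simp only [Option.not_isSome_iff_eq_none] at h
    rw [h x (List.mem_of_mem_tail hx), h y (List.mem_of_mem_tail hy)]
  have := hnodup.length_le_card
  simp only [List.length_map, List.length_tail, Walk.length_support, Fintype.card_bool] at this
  have := hc.three_le_length
  omega

theorem cycle_length_eq_three {v : TVertex D} {c : (tGraph D).Walk v v} (hc : c.IsCycle) :
    c.length = 3 := by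
  obtain ⟨⟨s, _ | ⟨i, b⟩⟩, hmem, hsome⟩ := exists_mem_support_isSome hc
  · simp at hsome
  · refine hc.length_eq_three_of_mem_support hmem (a := (s, some (i, !b))) (b := (s, none))
      (fun z hz => (adj_some_iff.mp hz).symm) (fun z hz => ?_)
    simpa using (adj_some_iff.mp hz).symm

theorem exists_forall_isSome_of_two_lt_card {W : Type*} {f : W → Set (TVertex D)}
    (hdisj : Pairwise (Disjoint on f)) {t : Finset W} (ht : 2 < #t) :
    ∃ w ∈ t, ∀ x ∈ f w, x.2.isSome := by
  by_contra! h
  choose x hx hnone using h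
  obtain ⟨a, -, a', -, hne, heq⟩ := exists_ne_map_eq_of_card_lt_of_maps_to
    (s := t.attach) (t := (univ : Finset Bool)) (by simpa using ht)
    (f := fun a => (x a.1 a.2).1) fun _ _ => mem_coe.mpr (mem_univ _)
  have hxx : x a.1 a.2 = x a'.1 a'.2 := Prod.ext heq (by
    simp only [Option.not_isSome_iff_eq_none] at hnone
    rw [hnone, hnone])
  exact Set.disjoint_left.mp (hdisj (Subtype.coe_injective.ne hne)) (hx _ _) (hxx ▸ hx a'.1 a'.2)

theorem exists_eq_some_of_connected {B : Set (TVertex D)}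
    (hB : ((tGraph D).induce B).Connected) (hsome : ∀ x ∈ B, x.2.isSome) :
    ∃ s i, ∀ x ∈ B, ∃ b, x = (s, some (i, b)) := by
  let φ (y : B) : Bool × Option (Fin (D + 1)) := ((y : TVertex D).1, (y : TVertex D).2.map Prod.fst)
  have hφ : ∀ y z, ((tGraph D).induce B).Adj y z → φ y = φ z := by
    rintro ⟨⟨t, _ | ⟨j, c⟩⟩, hy⟩ ⟨z, hz⟩ hyz
    · simpa using hsome _ hy
    · rcases adj_some_iff.mp hyz with rfl | rfl
      · simpa using hsome _ hz
      · rfl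
  obtain ⟨⟨⟨s, _ | ⟨i, b⟩⟩, hv⟩⟩ := hB.nonempty
  · simpa using hsome _ hv
  refine ⟨s, i, fun ⟨t, o⟩ hx => ?_⟩
  have := (hB.preconnected ⟨_, hv⟩ ⟨_, hx⟩).apply_eq_of_forall_adj hφ
  obtain _ | ⟨j, c⟩ := o
  · simp [φ] at this
  · simp only [φ, Prod.mk.injEq, Option.map_some, Option.some.injEq] at this
    exact ⟨c, by rw [this.1, this.2]⟩

theorem not_isMinor {W : Type*} [Nonempty W] {H : SimpleGraph W}
    (hH : ∀ w, 3 ≤ (H.neighborSet w).ncard) : ¬ H.IsMinor (tGraph D) := by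
  rintro ⟨f, hne, hconn, hdisj, hedge⟩
  have hnbrs : ∀ w, ∃ t : Finset W, 3 ≤ #t ∧ ∀ w' ∈ t, H.Adj w w' := fun w =>
    have hfin : (H.neighborSet w).Finite := Set.finite_of_ncard_pos (by linarith [hH w])
    ⟨hfin.toFinset, Set.ncard_eq_toFinset_card _ hfin ▸ hH w, fun _ => by simp⟩
  obtain ⟨t₀, ht₀, -⟩ := hnbrs (Classical.arbitrary W)
  obtain ⟨w, -, hw⟩ := exists_forall_isSome_of_two_lt_card hdisj (t := t₀) (by omega)
  obtain ⟨s, i, hsub⟩ := exists_eq_some_of_connected (hconn w) hw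
  obtain ⟨t, ht, hadj⟩ := hnbrs w
  let S : Finset (TVertex D) := {(s, none), (s, some (i, false)), (s, some (i, true))}
  have hmem : ∀ b, ((s, some (i, b)) : TVertex D) ∈ S := by
    rintro (_ | _) <;> simp [S]
  have hlt := card_lt_of_branchSets f hne hdisj hedge hadj (S := S)
    (fun a ha => by obtain ⟨b, rfl⟩ := hsub a ha; exact hmem b)
    (fun a ha z hz => by
      obtain ⟨b, rfl⟩ := hsub a ha
      rcases adj_some_iff.mp hz with rfl | rfl
      · simp [S]
      · exact hmem _)
  exact hlt.not_ge (ht.trans' card_le_three)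

end TGraph

theorem stmt3 (D : ℕ) :
    ∃ (V : Type) (_ : Fintype V) (G : SimpleGraph V), G.Planar ∧
      (∀ (v : V) (w : G.Walk v v), w.IsCycle → w.length = 3) ∧
      ¬ G.DefectiveColorable ![0, D] := by
  have hK₅ : ∀ w : Fin 5, 3 ≤ ((completeGraph (Fin 5)).neighborSet w).ncard := fun w => by
    rw [neighborSet_top, Set.ncard_compl]
    simp
  have hK₃₃ : ∀ w, 3 ≤ ((completeBipartiteGraph (Fin 3) (Fin 3)).neighborSet w).ncard := by
    have hrange {ι : Type} (g : Fin 3 → ι) (hg : Injective g) : 3 ≤ (Set.range g).ncard := by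
      simp [Set.ncard_range_of_injective hg]
    rintro (_ | _)
    · convert hrange _ Sum.inr_injective
      ext (_ | _) <;> simp
    · convert hrange _ Sum.inl_injective
      ext (_ | _) <;> simp
  exact ⟨TVertex D, inferInstance, tGraph D, ⟨TGraph.not_isMinor hK₅, TGraph.not_isMinor hK₃₃⟩,
    fun _ _ => TGraph.cycle_length_eq_three, TGraph.not_defectiveColorable⟩
end

section
/- For every nonnegative integer D, there exists a planar graph all of whose cycles have length 3 or 4 that is not (0, 0, D)-colorable. -/
open SimpleGraph

/-!
Call the three vertices `(i, none)` of `X D` that come from `v` the apexes. Every edge leaving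
a triangle `tri D i j` ends at the apex `(i, none)`, so a connected vertex set that meets the
triangle and avoids that apex stays inside the triangle. The same cut-vertex structure confines
every cycle to a `K₄` block `block D i j` or to the triangle of apexes.

In a minor model at most three branch sets contain an apex. A `K₅` model therefore has an
apex-free branch set, which lies in a triangle, and its four neighbouring branch sets need four
distinct vertices of the surrounding `K₄` block outside it. A `K₃,₃` model has two apex-free
branch sets on the same side; a branch set on the other side that avoids the apex of the first
one's block is trapped in that triangle, so both apex-free sets lie in one block, which leaves
only two vertices for their three common neighbours.

In a `(0, 0, D)`-colouring every triangle has a vertex of colour `2`. An apex of colour `2`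
would then have `D + 1` neighbours of colour `2`, so the triangle of apexes has no vertex of
colour `2`, a contradiction.
-/

namespace SimpleGraph

variable {V : Type*} {G : SimpleGraph V}

section CutVertex

variable {T : Set V} {a : V}

theorem Walk.mem_tail_support_of_neighborSet_subset
    (hT : ∀ x ∈ T, G.neighborSet x ⊆ insert a T) {x y : V} (p : G.Walk x y) (hx : x ∈ T)
    (hy : y ∉ insert a T) : a ∈ p.support.tail := by
  obtain ⟨d, hd, hd₁, hd₂⟩ :=
    p.exists_boundary_dart T hx fun h ↦ hy (Set.mem_insert_of_mem a h)
  have had : d.snd = a := (hT _ hd₁ d.adj).resolve_right hd₂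
  exact had ▸ p.map_snd_darts ▸ List.mem_map_of_mem hd

theorem subset_of_induce_connected (hT : ∀ x ∈ T, G.neighborSet x ⊆ insert a T) {B : Set V}
    (hB : (G.induce B).Connected) (haB : a ∉ B) {x : V} (hxB : x ∈ B) (hxT : x ∈ T) :
    B ⊆ T := by
  intro y hyB
  by_contra hyT
  obtain ⟨p⟩ := hB ⟨x, hxB⟩ ⟨y, hyB⟩
  have ha := List.mem_of_mem_tail <| (p.map (Embedding.induce B).toHom)
    |>.mem_tail_support_of_neighborSet_subset hT hxT (by rintro (rfl | h) <;> contradiction)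
  rw [Walk.support_map, List.mem_map] at ha
  obtain ⟨z, -, rfl⟩ := ha
  exact haB z.2

theorem Walk.IsCycle.support_subset_of_neighborSet_subset
    (hT : ∀ x ∈ T, G.neighborSet x ⊆ insert a T) {v x : V} {c : G.Walk v v} (hc : c.IsCycle)
    (hx : x ∈ c.support) (hxT : x ∈ T) : ∀ y ∈ c.support, y ∈ insert a T := by
  classical
  intro y hy
  by_contra hyT
  rw [← c.mem_support_rotate_iff x hx] at hy
  replace hc := hc.rotate hx
  set c := c.rotate x hx
  have h₁ := (c.takeUntil y hy).mem_tail_support_of_neighborSet_subset hT hxT hyT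
  have h₂ := List.mem_of_mem_tail <|
    (c.dropUntil y hy).reverse.mem_tail_support_of_neighborSet_subset hT hxT hyT
  rw [Walk.support_reverse, List.mem_reverse, ← Walk.cons_tail_support, List.mem_cons] at h₂
  have h₂ : a ∈ (c.dropUntil y hy).support.tail :=
    h₂.resolve_left fun h ↦ hyT (h ▸ Set.mem_insert a T)
  have hnodup := hc.support_nodup
  rw [← c.take_spec hy, Walk.tail_support_append] at hnodup
  exact List.disjoint_of_nodup_append hnodup h₁ h₂

end CutVertex

theorem Walk.IsCycle.length_le_card {x : V} {c : G.Walk x x} (hc : c.IsCycle) {s : Finset V}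
    (hs : ∀ y ∈ c.support, y ∈ s) : c.length ≤ s.card := by
  classical
  have := Finset.card_le_card (s := c.support.tail.toFinset) fun y hy ↦
    hs y (List.mem_of_mem_tail (List.mem_toFinset.1 hy))
  rwa [List.toFinset_card_of_nodup hc.support_nodup, List.length_tail, Walk.length_support,
    Nat.add_sub_cancel] at this

section Minor

variable {W W' : Type*} {H : SimpleGraph W} {H' : SimpleGraph W'}

structure MinorModel (H : SimpleGraph W) (G : SimpleGraph V) where
  branch : W → Set V
  connected : ∀ w, (G.induce (branch w)).Connected
  disjoint : Pairwise fun w w' ↦ Disjoint (branch w) (branch w')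
  exists_adj : ∀ ⦃w w'⦄, H.Adj w w' → ∃ x ∈ branch w, ∃ y ∈ branch w', G.Adj x y

theorem isMinor_iff_nonempty_minorModel : H.IsMinor G ↔ Nonempty (H.MinorModel G) := by
  constructor
  · rintro ⟨f, -, hconn, hdisj, hadj⟩
    exact ⟨⟨f, hconn, hdisj, hadj⟩⟩
  · rintro ⟨m⟩
    exact ⟨m.branch, fun w ↦ Set.nonempty_coe_sort.1 (m.connected w).nonempty, m.connected,
      m.disjoint, m.exists_adj⟩

namespace MinorModel

variable (m : H.MinorModel G)

def comp (φ : H' →g H) (hφ : Function.Injective φ) : H'.MinorModel G where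
  branch := m.branch ∘ φ
  connected w := m.connected (φ w)
  disjoint _ _ h := m.disjoint (hφ.ne h)
  exists_adj _ _ h := m.exists_adj (φ.map_adj h)

theorem branch_nonempty (w : W) : (m.branch w).Nonempty :=
  Set.nonempty_coe_sort.1 (m.connected w).nonempty

theorem card_le_of_forall_exists_mem {s : Finset W} {K : Finset V}
    (h : ∀ w ∈ s, ∃ y ∈ K, y ∈ m.branch w) : s.card ≤ K.card :=
  Finset.card_le_card_of_forall_subsingleton (fun w y ↦ y ∈ m.branch w) h
    fun _ _ _ hw₁ _ hw₂ ↦ by_contra fun hne ↦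
      Set.disjoint_left.1 (m.disjoint hne) hw₁.2 hw₂.2

end MinorModel

end Minor

namespace IsDefectiveColoring

variable {k : ℕ} {d : Fin k → ℕ} {f : V → Fin k}

-- `Set.ncard` is `0` on infinite sets, so the defect bound says nothing without finiteness.
theorem card_le [Finite V] (hf : G.IsDefectiveColoring d f) {v : V} {s : Finset V}
    (hs : ∀ u ∈ s, G.Adj v u ∧ f u = f v) : s.card ≤ d (f v) := by
  rw [← Set.ncard_coe_finset]
  exact (Set.ncard_le_ncard hs (Set.toFinite _)).trans (hf v)

theorem pos_of_adj [Finite V] (hf : G.IsDefectiveColoring d f) {u v : V} (huv : G.Adj u v)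
    (h : f u = f v) : 0 < d (f u) :=
  hf.card_le (s := {v}) (by simpa using ⟨huv, h.symm⟩)

theorem eq_two_of_adj [Finite V] {D : ℕ} {f : V → Fin 3}
    (hf : G.IsDefectiveColoring ![0, 0, D] f) {u v : V} (huv : G.Adj u v) (h : f u = f v) :
    f u = 2 := by
  have := hf.pos_of_adj huv h
  revert this
  generalize f u = c
  fin_cases c <;> simp

theorem exists_eq_two_of_triangle [Finite V] {D : ℕ} {f : V → Fin 3}
    (hf : G.IsDefectiveColoring ![0, 0, D] f) {x y z : V} (hxy : G.Adj x y) (hxz : G.Adj x z)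
    (hyz : G.Adj y z) : f x = 2 ∨ f y = 2 ∨ f z = 2 := by
  have := hf.eq_two_of_adj hxy
  have := hf.eq_two_of_adj hxz
  have := hf.eq_two_of_adj hyz
  omega

end IsDefectiveColoring

end SimpleGraph

-- `none` is the identified vertex `v`; `some (j, k)` is vertex `k` of the triangle that forms
-- the `j`-th copy of `K₄` together with `v`.
def X0 (D : ℕ) : SimpleGraph (Option (Fin (D + 1) × Fin 3)) where
  Adj
    | none, none => False
    | none, some _ | some _, none => True
    | some (j, k), some (j', k') => j = j' ∧ k ≠ k'
  symm := ⟨by rintro (_ | ⟨j, k⟩) (_ | ⟨j', k'⟩) h <;> simp_all [eq_comm]⟩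
  loopless := ⟨by rintro (_ | ⟨j, k⟩) h <;> simp_all⟩

def X (D : ℕ) : SimpleGraph (Fin 3 × Option (Fin (D + 1) × Fin 3)) where
  Adj p q := (p.1 = q.1 ∧ (X0 D).Adj p.2 q.2) ∨ (p.1 ≠ q.1 ∧ p.2 = none ∧ q.2 = none)
  symm := ⟨by
    rintro p q (⟨h, h'⟩ | ⟨h, h', h''⟩)
    · exact .inl ⟨h.symm, h'.symm⟩
    · exact .inr ⟨Ne.symm h, h'', h'⟩⟩
  loopless := ⟨by
    rintro p (⟨-, h⟩ | ⟨h, -⟩)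
    · exact (X0 D).loopless.irrefl _ h
    · exact h rfl⟩

namespace X

open Finset SimpleGraph

variable {D : ℕ}

def tri (D : ℕ) (i : Fin 3) (j : Fin (D + 1)) : Set (Fin 3 × Option (Fin (D + 1) × Fin 3)) :=
  Set.range fun k ↦ (i, some (j, k))

def block (D : ℕ) (i : Fin 3) (j : Fin (D + 1)) :
    Finset (Fin 3 × Option (Fin (D + 1) × Fin 3)) :=
  insert (i, none) (univ.image fun k ↦ (i, some (j, k)))

def apexes (D : ℕ) : Finset (Fin 3 × Option (Fin (D + 1) × Fin 3)) :=
  univ.image fun i ↦ (i, none)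

theorem coe_block (i : Fin 3) (j : Fin (D + 1)) :
    (block D i j : Set (Fin 3 × _)) = insert (i, none) (tri D i j) := by
  simp [block, tri]

theorem mem_block_of_mem_tri {i : Fin 3} {j : Fin (D + 1)} {y} (hy : y ∈ tri D i j) :
    y ∈ block D i j := by
  rw [← mem_coe, coe_block]
  exact .inr hy

theorem mem_tri_of_mem_block {i : Fin 3} {j : Fin (D + 1)} {y} (hy : y ∈ block D i j)
    (hne : y ≠ (i, none)) : y ∈ tri D i j := by
  rw [← mem_coe, coe_block] at hy
  exact hy.resolve_left hne

theorem card_block_le (i : Fin 3) (j : Fin (D + 1)) : (block D i j).card ≤ 4 :=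
  (card_insert_le _ _).trans (Nat.succ_le_succ (card_image_le.trans_eq (card_fin 3)))

theorem card_apexes_le : (apexes D).card ≤ 3 :=
  card_image_le.trans_eq (card_fin 3)

theorem neighborSet_subset {i : Fin 3} {j : Fin (D + 1)} :
    ∀ x ∈ tri D i j, (X D).neighborSet x ⊆ insert (i, none) (tri D i j) := by
  rintro _ ⟨k, rfl⟩ ⟨i', _ | ⟨j', k'⟩⟩ h <;> simp_all [X, X0, tri]

theorem eq_of_mem_tri_of_mem_insert_tri {i i' : Fin 3} {j j' : Fin (D + 1)} {x}
    (hx : x ∈ tri D i j) (hx' : x ∈ insert (i', none) (tri D i' j')) : i = i' ∧ j = j' := by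
  obtain ⟨k, rfl⟩ := hx
  simpa [tri, eq_comm] using hx'

theorem exists_subset_tri {B : Set (Fin 3 × Option (Fin (D + 1) × Fin 3))}
    (hB : ((X D).induce B).Connected) (hfree : ∀ i, (i, none) ∉ B) :
    ∃ i j, B ⊆ tri D i j := by
  obtain ⟨⟨i, _ | ⟨j, k⟩⟩, hx⟩ := Set.nonempty_coe_sort.1 hB.nonempty
  · exact absurd hx (hfree i)
  · exact ⟨i, j, subset_of_induce_connected neighborSet_subset hB (hfree i) hx ⟨k, rfl⟩⟩

theorem length_eq_three_or_four {v} {c : (X D).Walk v v} (hc : c.IsCycle) :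
    c.length = 3 ∨ c.length = 4 := by
  have h₃ := hc.three_le_length
  have h₄ : c.length ≤ 4 := by
    by_cases h : ∃ i j k, (i, some (j, k)) ∈ c.support
    · obtain ⟨i, j, k, hx⟩ := h
      refine (hc.length_le_card fun y hy ↦ ?_).trans (card_block_le i j)
      rw [← mem_coe, coe_block]
      exact hc.support_subset_of_neighborSet_subset neighborSet_subset hx ⟨k, rfl⟩ y hy
    · simp only [not_exists] at h
      refine (hc.length_le_card fun y hy ↦ ?_).trans (card_apexes_le.trans (by norm_num))
      obtain ⟨i, _ | ⟨j, k⟩⟩ := y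
      · simp [apexes]
      · exact absurd hy (h i j k)
  omega

section Minor

variable {W : Type*} {H : SimpleGraph W} (m : H.MinorModel (X D))

theorem exists_mem_block_of_adj {w w' : W} {i : Fin 3} {j : Fin (D + 1)}
    (hw : m.branch w ⊆ tri D i j) (h : H.Adj w w') :
    ∃ y ∈ block D i j, y ∈ m.branch w' ∧ y ∉ m.branch w := by
  obtain ⟨x, hx, y, hy, hxy⟩ := m.exists_adj h
  refine ⟨y, ?_, hy, Set.disjoint_right.1 (m.disjoint h.ne) hy⟩
  rw [← mem_coe, coe_block]
  exact neighborSet_subset x (hw hx) hxy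

open Classical in
theorem card_le_card_apexFree_add_three [Fintype W] :
    Fintype.card W ≤ #{w | ∀ i, (i, none) ∉ m.branch w} + 3 := by
  have := m.card_le_of_forall_exists_mem (s := {w | ∃ i, (i, none) ∈ m.branch w})
    (K := apexes D) fun w hw ↦ by
      obtain ⟨i, hi⟩ := (mem_filter.1 hw).2
      exact ⟨_, mem_image_of_mem _ (mem_univ i), hi⟩
  have := card_filter_add_card_filter_not (s := univ) fun w ↦ ∃ i, (i, none) ∈ m.branch w
  simp only [not_exists, card_univ] at this
  have := card_apexes_le (D := D)
  omega

end Minor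

theorem not_completeGraph_five (m : (completeGraph (Fin 5)).MinorModel (X D)) : False := by
  classical
  obtain ⟨w, -, hw⟩ : ∃ w ∈ univ, ∀ i, (i, none) ∉ m.branch w := by
    rw [← filter_nonempty_iff, ← card_pos]
    have := card_le_card_apexFree_add_three m
    simp only [Fintype.card_fin] at this
    omega
  obtain ⟨i, j, hij⟩ := exists_subset_tri (m.connected w) hw
  obtain ⟨u, hu⟩ := m.branch_nonempty w
  have h₄ := m.card_le_of_forall_exists_mem (s := univ.erase w) (K := (block D i j).erase u)
    fun w' hw' ↦ by
      obtain ⟨y, hy, hyw', hyw⟩ := exists_mem_block_of_adj m hij (ne_of_mem_erase hw').symm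
      exact ⟨y, mem_erase.2 ⟨fun h ↦ hyw (h ▸ hu), hy⟩, hyw'⟩
  have := card_block_le (D := D) i j
  rw [card_erase_of_mem (mem_univ w), card_univ, Fintype.card_fin,
    card_erase_of_mem (mem_block_of_mem_tri (hij hu))] at h₄
  omega

theorem not_completeBipartiteGraph_three_of_apexFree
    (m : (completeBipartiteGraph (Fin 3) (Fin 3)).MinorModel (X D)) {p q : Fin 3} (hpq : p ≠ q)
    (hp : ∀ i, (i, none) ∉ m.branch (.inl p)) (hq : ∀ i, (i, none) ∉ m.branch (.inl q)) :
    False := by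
  classical
  obtain ⟨i, j, hP⟩ := exists_subset_tri (m.connected _) hp
  obtain ⟨i', j', hQ⟩ := exists_subset_tri (m.connected _) hq
  have hadj : ∀ r b, (completeBipartiteGraph (Fin 3) (Fin 3)).Adj (.inl r) (.inr b) := by simp
  choose y hy hyR hyP using fun b ↦ exists_mem_block_of_adj m hP (hadj p b)
  obtain ⟨b, hb⟩ : ∃ b, (i, none) ∉ m.branch (.inr b) := by
    by_contra! h
    exact Set.disjoint_left.1 (m.disjoint (by decide : (.inr 0 : Fin 3 ⊕ Fin 3) ≠ .inr 1))
      (h 0) (h 1)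
  have hRb := subset_of_induce_connected neighborSet_subset (m.connected _) hb (hyR b)
    (mem_tri_of_mem_block (hy b) fun h ↦ hb (h ▸ hyR b))
  obtain ⟨z, hz, hzR, -⟩ := exists_mem_block_of_adj m hQ (hadj q b)
  rw [← mem_coe, coe_block] at hz
  obtain ⟨rfl, rfl⟩ := eq_of_mem_tri_of_mem_insert_tri (hRb hzR) hz
  obtain ⟨u, hu⟩ := m.branch_nonempty (.inl p)
  obtain ⟨u', hu'⟩ := m.branch_nonempty (.inl q)
  have h₃ := m.card_le_of_forall_exists_mem (s := univ.map .inr)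
    (K := ((block D i j).erase u).erase u') fun w hw ↦ by
      obtain ⟨b, -, rfl⟩ := mem_map.1 hw
      have hyu' : y b ≠ u' := fun h ↦
        Set.disjoint_left.1 (m.disjoint Sum.inr_ne_inl) (hyR b) (h ▸ hu')
      have hyu : y b ≠ u := fun h ↦ hyP b (h ▸ hu)
      exact ⟨y b, mem_erase.2 ⟨hyu', mem_erase.2 ⟨hyu, hy b⟩⟩, hyR b⟩
  have hu'u : u' ≠ u := fun h ↦
    Set.disjoint_left.1 (m.disjoint (Sum.inl_injective.ne hpq.symm)) hu' (h ▸ hu)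
  have := card_block_le (D := D) i j
  rw [card_erase_of_mem (mem_erase.2 ⟨hu'u, mem_block_of_mem_tri (hQ hu')⟩),
    card_erase_of_mem (mem_block_of_mem_tri (hP hu)), card_map, card_univ,
    Fintype.card_fin] at h₃
  omega

theorem not_completeBipartiteGraph_three
    (m : (completeBipartiteGraph (Fin 3) (Fin 3)).MinorModel (X D)) : False := by
  classical
  have := card_le_card_apexFree_add_three m
  simp only [Fintype.card_sum, Fintype.card_fin] at this
  obtain ⟨w, hw, w', hw', hne, hside⟩ := exists_ne_map_eq_of_card_lt_of_maps_to
    (s := {w | ∀ i, (i, none) ∉ m.branch w}) (t := univ) (f := Sum.isLeft)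
    (by rw [card_univ, Fintype.card_bool]; omega) fun _ _ ↦ mem_coe.2 (mem_univ _)
  simp only [mem_filter, mem_univ, true_and] at hw hw'
  rcases w with p | p <;> rcases w' with q | q <;> simp only [Sum.isLeft_inl, Sum.isLeft_inr,
    Bool.true_eq_false, Bool.false_eq_true, ne_eq, Sum.inl.injEq, Sum.inr.injEq] at hside hne
  · exact not_completeBipartiteGraph_three_of_apexFree m hne hw hw'
  · let swap : completeBipartiteGraph (Fin 3) (Fin 3) →g
        completeBipartiteGraph (Fin 3) (Fin 3) := ⟨Sum.swap, by rintro (_ | _) (_ | _) <;> simp⟩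
    exact not_completeBipartiteGraph_three_of_apexFree
      (m.comp swap Sum.swap_leftInverse.injective) hne hw hw'

theorem planar : (X D).Planar :=
  ⟨fun h ↦ (isMinor_iff_nonempty_minorModel.1 h).elim not_completeGraph_five,
    fun h ↦ (isMinor_iff_nonempty_minorModel.1 h).elim not_completeBipartiteGraph_three⟩

theorem not_defectiveColorable : ¬ (X D).DefectiveColorable ![0, 0, D] := by
  rintro ⟨f, hf⟩
  have hapex : ∀ i, f (i, none) ≠ 2 := by
    intro i hi
    have : ∀ j, ∃ k, f (i, some (j, k)) = 2 := fun j ↦ by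
      rcases hf.exists_eq_two_of_triangle (x := (i, some (j, 0))) (y := (i, some (j, 1)))
        (z := (i, some (j, 2))) (by simp [X, X0]) (by simp [X, X0]) (by simp [X, X0])
        with h | h | h
      exacts [⟨0, h⟩, ⟨1, h⟩, ⟨2, h⟩]
    choose k hk using this
    have := hf.card_le (v := (i, none)) (s := univ.image fun j ↦ (i, some (j, k j)))
      (by simp [X, X0, hk, hi])
    rw [card_image_of_injective _ fun j j' h ↦ by simp_all, card_univ, Fintype.card_fin,
      hi] at this
    simp at this
  rcases hf.exists_eq_two_of_triangle (x := (0, none)) (y := (1, none)) (z := (2, none))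
    (by simp [X]) (by simp [X]) (by simp [X]) with h | h | h
  exacts [hapex 0 h, hapex 1 h, hapex 2 h]

end X

theorem stmt5 (D : ℕ) :
    ∃ (V : Type) (_ : Fintype V) (G : SimpleGraph V), G.Planar ∧
      (∀ (v : V) (w : G.Walk v v), w.IsCycle → w.length = 3 ∨ w.length = 4) ∧
      ¬ G.DefectiveColorable ![0, 0, D] :=
  ⟨_, inferInstance, X D, X.planar, fun _ _ ↦ X.length_eq_three_or_four,
    X.not_defectiveColorable⟩
end

section
/- Let G be a vertex-minimal counterexample to the claim that every planar graph with no 3-, 4-, or 6-cycles is (0, 45)-colorable (i.e., G is planar, has no cycles of length 3, 4, or 6, is not (0, 45)-colorable, and every such graph with fewer vertices is (0, 45)-colorable). Then every vertex of G of degree at most 46 has a neighbor of degree at least 47. -/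
open SimpleGraph

/-! Colour `G - v` by minimality. If no neighbour of `v` has colour 0, give `v` colour 0.
Otherwise give `v` colour 1: at most 45 of its at most 46 neighbours share it. A neighbour `x`
of `v` in colour 1 can then exceed the defect only if all its other neighbours are in colour 1.
Such neighbours of `v` are pairwise non-adjacent (there are no triangles) and have no neighbour
in colour 0, so they can all be moved to colour 0. -/

open Function

theorem Set.ncard_le_of_subset_sdiff_singleton {α : Type*} [Finite α] {s t : Set α} {a : α}
    {d : ℕ} (ha : a ∈ t) (hst : s ⊆ t \ {a}) (ht : t.ncard ≤ d + 1) : s.ncard ≤ d := by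
  have := Set.ncard_le_ncard hst
  rw [Set.ncard_sdiff_singleton_of_mem ha] at this
  omega

namespace SimpleGraph

variable {V W X : Type*}

theorem IsMinor.of_injective_hom {H : SimpleGraph X} {G : SimpleGraph V} {G' : SimpleGraph W}
    (h : H.IsMinor G) (φ : G →g G') (hφ : Injective φ) : H.IsMinor G' := by
  obtain ⟨f, hne, hconn, hdisj, hadj⟩ := h
  refine ⟨fun w => φ '' f w, fun w => (hne w).image φ,
    fun w => (hconn w).map (induceHom φ (Set.mapsTo_image φ (f w)))
      (Set.surjective_mapsTo_image_restrict φ (f w)),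
    fun w w' hww' => (Set.disjoint_image_iff hφ).mpr (hdisj w w' hww'), fun w w' hww' => ?_⟩
  obtain ⟨a, ha, b, hb, hab⟩ := hadj w w' hww'
  exact ⟨φ a, Set.mem_image_of_mem φ ha, φ b, Set.mem_image_of_mem φ hb, φ.map_adj hab⟩

theorem Planar.of_injective_hom {G : SimpleGraph V} {G' : SimpleGraph W} (h : G'.Planar)
    (φ : G →g G') (hφ : Injective φ) : G.Planar :=
  ⟨fun hK => h.1 (hK.of_injective_hom φ hφ), fun hK => h.2 (hK.of_injective_hom φ hφ)⟩

theorem HasNoCycleOfLength.of_injective_hom {G : SimpleGraph V} {G' : SimpleGraph W} {n : ℕ}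
    (h : G'.HasNoCycleOfLength n) (φ : G →g G') (hφ : Injective φ) : G.HasNoCycleOfLength n :=
  fun v w hw => Walk.length_map φ w ▸ h (φ v) (w.map φ) (hw.map hφ)

theorem HasNoCycleOfLength.not_adj_of_adj_of_adj {G : SimpleGraph V}
    (h : G.HasNoCycleOfLength 3) {a b c : V} (hab : G.Adj a b) (hac : G.Adj a c) :
    ¬ G.Adj b c := fun hbc => by
  refine h a (.cons hab (.cons hbc (.cons hac.symm .nil))) ?_ rfl
  have := hab.ne; have := hbc.ne; have := hac.ne
  simp only [Walk.cons_isCycle_iff, Walk.isPath_def, Walk.support_cons, Walk.support_nil,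
    Walk.edges_cons, Walk.edges_nil, List.mem_cons, List.nodup_cons, Sym2.eq_iff]
  grind

theorem isDefectiveColoring_zero_iff [Finite V] {G : SimpleGraph V} {d : ℕ} {c : V → Fin 2} :
    G.IsDefectiveColoring ![0, d] c ↔
      (∀ x u, G.Adj x u → c x = 0 → c u = 1) ∧
        ∀ x, c x = 1 → {u | G.Adj x u ∧ c u = 1}.ncard ≤ d := by
  refine ⟨fun hc => ⟨fun x u hxu hx => ?_, fun x hx => by simpa [hx] using hc x⟩,
    fun ⟨h0, h1⟩ x => ?_⟩
  · have hempty : {u | G.Adj x u ∧ c u = c x} = ∅ :=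
      (Set.ncard_eq_zero (Set.toFinite _)).mp (by simpa [hx] using hc x)
    exact Fin.eq_one_of_ne_zero _ fun hu => hempty.subset ⟨hxu, hu.trans hx.symm⟩
  · rcases Fin.exists_fin_two.mp ⟨c x, rfl⟩ with hx | hx
    · have hempty : {u | G.Adj x u ∧ c u = c x} = ∅ :=
        Set.eq_empty_of_forall_notMem fun u ⟨hxu, hu⟩ => by simp_all [h0 x u hxu hx]
      simp [hempty]
    · simpa [hx] using h1 x hx

theorem DefectiveColorable.deleteIncidenceSet_of_induce {k : ℕ} [NeZero k] {d : Fin k → ℕ}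
    {G : SimpleGraph V} {v : V} (h : (G.induce {v}ᶜ).DefectiveColorable d) :
    (G.deleteIncidenceSet v).DefectiveColorable d := by
  classical
  obtain ⟨f, hf⟩ := h
  refine ⟨fun x => if hx : x = v then 0 else f ⟨x, hx⟩, fun x => ?_⟩
  by_cases hx : x = v
  · simp [deleteIncidenceSet_adj, hx]
  · calc _ = (Subtype.val '' {u | (G.induce {v}ᶜ).Adj ⟨x, hx⟩ u ∧ f u = f ⟨x, hx⟩}).ncard := by
          congr 1
          ext u
          by_cases hu : u = v <;> simp [deleteIncidenceSet_adj, hx, hu]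
      _ ≤ _ := by
          rw [Set.ncard_image_of_injective _ Subtype.val_injective]
          simpa [hx] using hf ⟨x, hx⟩

section Extension

variable {G : SimpleGraph V} {v : V} {d : ℕ} {c : V → Fin 2}

theorem isDefectiveColoring_update_zero [Finite V] [DecidableEq V]
    (hc : (G.deleteIncidenceSet v).IsDefectiveColoring ![0, d] c)
    (hv : ∀ u, G.Adj v u → c u = 1) : G.IsDefectiveColoring ![0, d] (update c v 0) := by
  rw [isDefectiveColoring_zero_iff] at hc ⊢
  obtain ⟨hc0, hc1⟩ := hc
  refine ⟨fun x u hxu hx => ?_, fun x hx => ?_⟩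
  · by_cases hxv : x = v
    · subst hxv
      rw [update_of_ne hxu.ne']
      exact hv u hxu
    rw [update_of_ne hxv] at hx
    by_cases huv : u = v
    · subst huv
      simp [hv x hxu.symm] at hx
    rw [update_of_ne huv]
    exact hc0 x u (deleteIncidenceSet_adj.mpr ⟨hxu, hxv, huv⟩) hx
  · have hxv : x ≠ v := by rintro rfl; simp at hx
    rw [update_of_ne hxv] at hx
    refine (Set.ncard_le_ncard (t := {u | (G.deleteIncidenceSet v).Adj x u ∧ c u = 1})
      ?_).trans (hc1 x hx)
    rintro u ⟨hxu, hu⟩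
    have huv : u ≠ v := by rintro rfl; simp at hu
    rw [update_of_ne huv] at hu
    exact ⟨deleteIncidenceSet_adj.mpr ⟨hxu, hxv, huv⟩, hu⟩

open scoped Classical in
noncomputable def extendAtOne (G : SimpleGraph V) (v : V) (c : V → Fin 2) : V → Fin 2 := fun x =>
  if x = v then 1 else if G.Adj v x ∧ ∀ u, G.Adj x u → u ≠ v → c u = 1 then 0 else c x

@[simp]
theorem extendAtOne_self : extendAtOne G v c v = 1 := by
  simp [extendAtOne]

theorem extendAtOne_of_ne_of_eq_zero {x : V} (hxv : x ≠ v) (hx : c x = 0) :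
    extendAtOne G v c x = 0 := by
  simp [extendAtOne, hxv, hx]

theorem eq_one_of_extendAtOne_eq_one {x : V} (hxv : x ≠ v) (hx : extendAtOne G v c x = 1) :
    c x = 1 := by
  simp only [extendAtOne, if_neg hxv] at hx
  split_ifs at hx
  · simp at hx
  · exact hx

theorem extendAtOne_adj_of_eq_zero
    (hc0 : ∀ x u, (G.deleteIncidenceSet v).Adj x u → c x = 0 → c u = 1)
    (hind : ∀ x y, G.Adj v x → G.Adj v y → ¬ G.Adj x y) {x u : V} (hxu : G.Adj x u)
    (hx : extendAtOne G v c x = 0) : extendAtOne G v c u = 1 := by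
  have hxv : x ≠ v := by rintro rfl; simp at hx
  by_cases huv : u = v
  · simp [huv]
  have hxu' : (G.deleteIncidenceSet v).Adj x u := deleteIncidenceSet_adj.mpr ⟨hxu, hxv, huv⟩
  simp only [extendAtOne, if_neg hxv, if_neg huv] at hx ⊢
  split_ifs at hx with hbx <;> split_ifs with hbu
  · exact absurd hxu (hind x u hbx.1 hbu.1)
  · exact hbx.2 u hxu huv
  · simp [hbu.2 x hxu.symm hxv] at hx
  · exact hc0 x u hxu' hx

theorem ncard_extendAtOne_le [Finite V]
    (hc1 : ∀ x, c x = 1 → {u | (G.deleteIncidenceSet v).Adj x u ∧ c u = 1}.ncard ≤ d)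
    {u₀ : V} (hu₀ : G.Adj v u₀) (hcu₀ : c u₀ = 0) (hv : (G.neighborSet v).ncard ≤ d + 1)
    (hnbr : ∀ x, G.Adj v x → (G.neighborSet x).ncard ≤ d + 1) {x : V}
    (hx : extendAtOne G v c x = 1) : {u | G.Adj x u ∧ extendAtOne G v c u = 1}.ncard ≤ d := by
  by_cases hxv : x = v
  · subst hxv
    refine Set.ncard_le_of_subset_sdiff_singleton hu₀ (fun u ⟨hxu, hu⟩ => ⟨hxu, ?_⟩) hv
    rintro rfl
    simp [extendAtOne_of_ne_of_eq_zero hu₀.ne' hcu₀] at hu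
  have hcx := eq_one_of_extendAtOne_eq_one hxv hx
  by_cases hvx : G.Adj v x
  · obtain ⟨z, hxz, hzv, hcz⟩ : ∃ z, G.Adj x z ∧ z ≠ v ∧ c z = 0 := by
      by_contra! h
      have hbad : G.Adj v x ∧ ∀ u, G.Adj x u → u ≠ v → c u = 1 :=
        ⟨hvx, fun z hxz hzv => Fin.eq_one_of_ne_zero _ (h z hxz hzv)⟩
      rw [extendAtOne, if_neg hxv, if_pos hbad] at hx
      exact absurd hx (by decide)
    refine Set.ncard_le_of_subset_sdiff_singleton hxz (fun u ⟨hxu, hu⟩ => ⟨hxu, ?_⟩) (hnbr x hvx)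
    rintro rfl
    simp [extendAtOne_of_ne_of_eq_zero hzv hcz] at hu
  · refine (Set.ncard_le_ncard ?_).trans (hc1 x hcx)
    rintro u ⟨hxu, hu⟩
    have huv : u ≠ v := by rintro rfl; exact hvx hxu.symm
    exact ⟨deleteIncidenceSet_adj.mpr ⟨hxu, hxv, huv⟩, eq_one_of_extendAtOne_eq_one huv hu⟩

theorem DefectiveColorable.of_deleteIncidenceSet [Finite V]
    (h : (G.deleteIncidenceSet v).DefectiveColorable ![0, d])
    (hind : ∀ x y, G.Adj v x → G.Adj v y → ¬ G.Adj x y) (hv : (G.neighborSet v).ncard ≤ d + 1)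
    (hnbr : ∀ x, G.Adj v x → (G.neighborSet x).ncard ≤ d + 1) :
    G.DefectiveColorable ![0, d] := by
  classical
  obtain ⟨c, hc⟩ := h
  by_cases hzero : ∃ u, G.Adj v u ∧ c u = 0
  · obtain ⟨u₀, hu₀, hcu₀⟩ := hzero
    obtain ⟨hc0, hc1⟩ := isDefectiveColoring_zero_iff.mp hc
    exact ⟨extendAtOne G v c, isDefectiveColoring_zero_iff.mpr
      ⟨fun _ _ hxu hx => extendAtOne_adj_of_eq_zero hc0 hind hxu hx,
        fun _ hx => ncard_extendAtOne_le hc1 hu₀ hcu₀ hv hnbr hx⟩⟩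
  · push Not at hzero
    exact ⟨update c v 0, isDefectiveColoring_update_zero hc
      fun u hu => Fin.eq_one_of_ne_zero _ (hzero u hu)⟩

end Extension

end SimpleGraph

theorem stmt10 (V : Type) [Fintype V] (G : SimpleGraph V)
    (hp : G.Planar) (h3 : G.HasNoCycleOfLength 3)
    (h4 : G.HasNoCycleOfLength 4) (h6 : G.HasNoCycleOfLength 6)
    (hnc : ¬ G.DefectiveColorable ![0, 45])
    (hmin : ∀ (W : Type) [Fintype W] (H : SimpleGraph W), H.Planar →
      H.HasNoCycleOfLength 3 → H.HasNoCycleOfLength 4 → H.HasNoCycleOfLength 6 →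
      Fintype.card W < Fintype.card V → H.DefectiveColorable ![0, 45]) :
    ∀ v : V, (G.neighborSet v).ncard ≤ 46 →
      ∃ u, G.Adj v u ∧ 47 ≤ (G.neighborSet u).ncard := by
  classical
  intro v hv
  by_contra! hlow
  let φ : G.induce {v}ᶜ ↪g G := Embedding.induce {v}ᶜ
  have hcard : Fintype.card ({v}ᶜ : Set V) < Fintype.card V :=
    Fintype.card_subtype_lt (x := v) (by simp)
  have hcol := hmin _ (G.induce {v}ᶜ) (hp.of_injective_hom φ.toHom φ.injective)
    (h3.of_injective_hom φ.toHom φ.injective) (h4.of_injective_hom φ.toHom φ.injective)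
    (h6.of_injective_hom φ.toHom φ.injective) hcard
  exact hnc (hcol.deleteIncidenceSet_of_induce.of_deleteIncidenceSet
    (fun _ _ hx hy => h3.not_adj_of_adj_of_adj hx hy) hv fun x hx => Nat.le_of_lt_succ (hlow x hx))
end

section
/- Let G be a counterexample to the claim that every planar graph with no 4-cycles is (5, 5)-colorable, chosen with the minimum number of vertices of degree at least 3 and subject to that with the minimum number of edges. Then every edge of G has an endpoint of degree at least 7. -/
/-!
Delete an edge `uv` whose endpoints both have degree at most `6`. The smaller graph is still
planar without `4`-cycles, has no more vertices of degree at least `3`, and has fewer edges, so by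
minimality it has a `(5, 5)`-coloring `f`. This coloring extends to `G`: if some neighbour of `u`
has a colour different from `f u`, then `u` has at most `5` neighbours of its own colour;
otherwise all neighbours of `u` share its colour, and recolouring `u` with the other colour only
removes monochromatic edges. The same holds for `v`.
-/

open SimpleGraph

namespace SimpleGraph

variable {V W : Type*}

theorem IsMinor.mono {K : SimpleGraph W} {H G : SimpleGraph V} (h : H ≤ G) (hK : K.IsMinor H) :
    K.IsMinor G := by
  obtain ⟨f, hne, hconn, hdisj, hadj⟩ := hK
  refine ⟨f, hne, fun w => (hconn w).mono fun _ _ hab => h hab, hdisj, fun w w' hww' => ?_⟩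
  obtain ⟨a, ha, b, hb, hab⟩ := hadj w w' hww'
  exact ⟨a, ha, b, hb, h hab⟩

theorem Planar.anti {H G : SimpleGraph V} (h : H ≤ G) (hG : G.Planar) : H.Planar :=
  ⟨fun hK => hG.1 (hK.mono h), fun hK => hG.2 (hK.mono h)⟩

theorem HasNoCycleOfLength.anti {H G : SimpleGraph V} (h : H ≤ G) {n : ℕ}
    (hG : G.HasNoCycleOfLength n) : H.HasNoCycleOfLength n :=
  fun v w hw hlen => hG v (w.mapLe h) (hw.mapLe h) (by simpa using hlen)

theorem ncard_setOf_le_ncard_neighborSet_mono [Finite V] {H G : SimpleGraph V} (h : H ≤ G)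
    (n : ℕ) :
    {v | n ≤ (H.neighborSet v).ncard}.ncard ≤ {v | n ≤ (G.neighborSet v).ncard}.ncard :=
  Set.ncard_le_ncard fun _ hv => hv.trans (Set.ncard_le_ncard fun _ hx => h hx)

theorem ncard_edgeSet_deleteEdges_lt [Finite V] {G : SimpleGraph V} {u v : V} (huv : G.Adj u v) :
    (G.deleteEdges {s(u, v)}).edgeSet.ncard < G.edgeSet.ncard := by
  rw [edgeSet_deleteEdges]
  exact Set.ncard_sdiff_singleton_lt_of_mem huv

section DefectiveColoring

variable {k : ℕ} {d : Fin k → ℕ} {G : SimpleGraph V} {f : V → Fin k}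

theorem ncard_sameColor_le_of_adj_of_ne [Finite V] {u x : V} (hx : G.Adj u x) (hfx : f x ≠ f u) :
    {y | G.Adj u y ∧ f y = f u}.ncard ≤ (G.neighborSet u).ncard - 1 := by
  refine (Set.ncard_le_ncard (t := G.neighborSet u \ {x}) ?_).trans_eq
    (Set.ncard_sdiff_singleton_of_mem hx)
  rintro y ⟨hy, hfy⟩
  refine ⟨hy, ?_⟩
  rintro rfl
  exact hfx hfy

theorem IsDefectiveColoring.of_deleteEdges {u v : V}
    (hf : (G.deleteEdges {s(u, v)}).IsDefectiveColoring d f)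
    (hu : {y | G.Adj u y ∧ f y = f u}.ncard ≤ d (f u))
    (hv : {y | G.Adj v y ∧ f y = f v}.ncard ≤ d (f v)) :
    G.IsDefectiveColoring d f := by
  intro w
  by_cases hwu : w = u
  · exact hwu ▸ hu
  by_cases hwv : w = v
  · exact hwv ▸ hv
  convert hf w using 3 with x
  simp [hwu, hwv]

theorem IsDefectiveColoring.update_of_deleteEdges [Finite V] [DecidableEq V] {u v : V}
    (hf : (G.deleteEdges {s(u, v)}).IsDefectiveColoring d f)
    (hu : ∀ x, G.Adj u x → f x = f u) {c : Fin k} (hc : c ≠ f u) :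
    G.IsDefectiveColoring d (Function.update f u c) := by
  intro w
  by_cases hwu : w = u
  · subst hwu
    convert Nat.zero_le _
    refine (Set.ncard_eq_zero).mpr (Set.eq_empty_of_forall_notMem fun x ⟨hx, hfx⟩ => hc ?_)
    rw [Function.update_of_ne (G.ne_of_adj hx).symm, Function.update_self, hu x hx] at hfx
    exact hfx.symm
  rw [Function.update_of_ne hwu]
  refine (Set.ncard_le_ncard ?_).trans (hf w)
  rintro x ⟨hx, hfx⟩
  have hxu : x ≠ u := by
    rintro rfl
    rw [Function.update_self, hu w hx.symm] at hfx
    exact hc hfx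
  rw [Function.update_of_ne hxu] at hfx
  exact ⟨(deleteEdges_adj ..).mpr ⟨hx, by simp [hwu, hxu]⟩, hfx⟩

theorem DefectiveColorable.of_deleteEdges [Finite V] [Nontrivial (Fin k)] {u v : V}
    (hu : ∀ i, (G.neighborSet u).ncard ≤ d i + 1) (hv : ∀ i, (G.neighborSet v).ncard ≤ d i + 1)
    (hcol : (G.deleteEdges {s(u, v)}).DefectiveColorable d) : G.DefectiveColorable d := by
  classical
  obtain ⟨f, hf⟩ := hcol
  by_cases hmono_u : ∀ x, G.Adj u x → f x = f u
  · obtain ⟨c, hc⟩ := exists_ne (f u)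
    exact ⟨_, hf.update_of_deleteEdges hmono_u hc⟩
  by_cases hmono_v : ∀ x, G.Adj v x → f x = f v
  · obtain ⟨c, hc⟩ := exists_ne (f v)
    rw [Sym2.eq_swap] at hf
    exact ⟨_, hf.update_of_deleteEdges hmono_v hc⟩
  push Not at hmono_u hmono_v
  obtain ⟨x, hx, hfx⟩ := hmono_u
  obtain ⟨y, hy, hfy⟩ := hmono_v
  refine ⟨f, hf.of_deleteEdges ?_ ?_⟩
  · exact (ncard_sameColor_le_of_adj_of_ne hx hfx).trans (by have := hu (f u); omega)
  · exact (ncard_sameColor_le_of_adj_of_ne hy hfy).trans (by have := hv (f v); omega)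

end DefectiveColoring

end SimpleGraph

theorem stmt11 (V : Type) [Fintype V] (G : SimpleGraph V)
    (hp : G.Planar) (h4 : G.HasNoCycleOfLength 4)
    (hnc : ¬ G.DefectiveColorable ![5, 5])
    (hmin : ∀ (W : Type) [Fintype W] (H : SimpleGraph W), H.Planar →
      H.HasNoCycleOfLength 4 → ¬ H.DefectiveColorable ![5, 5] →
      {v : V | 3 ≤ (G.neighborSet v).ncard}.ncard
        ≤ {w : W | 3 ≤ (H.neighborSet w).ncard}.ncard ∧
      ({w : W | 3 ≤ (H.neighborSet w).ncard}.ncard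
          = {v : V | 3 ≤ (G.neighborSet v).ncard}.ncard →
        G.edgeSet.ncard ≤ H.edgeSet.ncard)) :
    ∀ u v : V, G.Adj u v →
      7 ≤ (G.neighborSet u).ncard ∨ 7 ≤ (G.neighborSet v).ncard := by
  intro u v huv
  by_contra! hlow
  have hle : G.deleteEdges {s(u, v)} ≤ G := G.deleteEdges_le _
  have hcol : (G.deleteEdges {s(u, v)}).DefectiveColorable ![5, 5] := by
    by_contra hnc'
    obtain ⟨hdeg, hedges⟩ := hmin V _ (hp.anti hle) (h4.anti hle) hnc'
    have hGH := hedges (le_antisymm (ncard_setOf_le_ncard_neighborSet_mono hle 3) hdeg)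
    exact hGH.not_gt (ncard_edgeSet_deleteEdges_lt huv)
  refine hnc (hcol.of_deleteEdges ?_ ?_) <;>
    simp only [Fin.forall_fin_two, Matrix.cons_val_zero, Matrix.cons_val_one] <;> omega
end

section
/- Let G be a plane graph with no cycles of length 3, 4, or 6 and with minimum degree at least 2. Then no vertex of degree 2 is incident with two distinct bad 5-faces, where a 5-face wxvyz (v of degree 2) is bad if it matches the degree pattern with two nonadjacent degree-2 vertices and one vertex of degree at least 47 as in the definition. In particular, if v is a degree-2 vertex with neighbors x and y, then there do not exist two distinct 5-faces each bounded by a cycle through x, v, y. -/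
open SimpleGraph

lemma no3 {V : Type*} (G : SimpleGraph V)
    (h3 : ∀ (v : V) (w : G.Walk v v), w.IsCycle → w.length ≠ 3)
    {a b c : V} (hab : G.Adj a b) (hbc : G.Adj b c) (hca : G.Adj c a) : False := by
  let w : G.Walk a a := .cons hab (.cons hbc (.cons hca .nil))
  refine h3 a w ?_ (by simp [w])
  simp [w, Walk.isCycle_def, Walk.isTrail_def, hab.ne, hbc.ne, hca.ne, hab.ne', hbc.ne', hca.ne',
    Sym2.eq_iff]

lemma no4 {V : Type*} (G : SimpleGraph V)
    (h4 : ∀ (v : V) (w : G.Walk v v), w.IsCycle → w.length ≠ 4)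
    {a b c d : V} (hab : G.Adj a b) (hbc : G.Adj b c) (hcd : G.Adj c d) (hda : G.Adj d a)
    (hac : a ≠ c) (hbd : b ≠ d) : False := by
  let w : G.Walk a a := .cons hab (.cons hbc (.cons hcd (.cons hda .nil)))
  refine h4 a w ?_ (by simp [w])
  simp [w, Walk.isCycle_def, Walk.isTrail_def, hab.ne, hbc.ne, hcd.ne, hda.ne,
    hab.ne', hbc.ne', hcd.ne', hda.ne', hac, hbd, hac.symm, hbd.symm, Sym2.eq_iff]

lemma no6 {V : Type*} (G : SimpleGraph V)
    (h6 : ∀ (v : V) (w : G.Walk v v), w.IsCycle → w.length ≠ 6)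
    {a b c d e f : V} (hab : G.Adj a b) (hbc : G.Adj b c) (hcd : G.Adj c d)
    (hde : G.Adj d e) (hef : G.Adj e f) (hfa : G.Adj f a)
    (hac : a ≠ c) (had : a ≠ d) (hae : a ≠ e) (hbd : b ≠ d) (hbe : b ≠ e) (hbf : b ≠ f)
    (hce : c ≠ e) (hcf : c ≠ f) (hdf : d ≠ f) : False := by
  let w : G.Walk a a := .cons hab (.cons hbc (.cons hcd (.cons hde (.cons hef (.cons hfa .nil)))))
  refine h6 a w ?_ (by simp [w])
  simp [w, Walk.isCycle_def, Walk.isTrail_def, hab.ne, hbc.ne, hcd.ne, hde.ne, hef.ne, hfa.ne,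
    hab.ne', hbc.ne', hcd.ne', hde.ne', hef.ne', hfa.ne',
    hac, had, hae, hbd, hbe, hbf, hce, hcf, hdf,
    hac.symm, had.symm, hae.symm, hbd.symm, hbe.symm, hbf.symm, hce.symm, hcf.symm, hdf.symm,
    Sym2.eq_iff]

theorem stmt17 (V : Type) [Fintype V] (G : SimpleGraph V)
    (h3 : G.HasNoCycleOfLength 3) (h4 : G.HasNoCycleOfLength 4)
    (h6 : G.HasNoCycleOfLength 6)
    (v x y : V) (hdeg : (G.neighborSet v).ncard = 2)
    (hvx : G.Adj v x) (hvy : G.Adj v y) (hxy : x ≠ y) :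
    ¬ ∃ v1 v2 u1 u2 : V,
        v1 ∉ ({v, x, y} : Set V) ∧ v2 ∉ ({v, x, y} : Set V) ∧
        u1 ∉ ({v, x, y} : Set V) ∧ u2 ∉ ({v, x, y} : Set V) ∧
        v1 ≠ v2 ∧ u1 ≠ u2 ∧ (v1 ≠ u1 ∨ v2 ≠ u2) ∧
        G.Adj x v2 ∧ G.Adj v2 v1 ∧ G.Adj v1 y ∧
        G.Adj x u2 ∧ G.Adj u2 u1 ∧ G.Adj u1 y := by
  rintro ⟨v1, v2, u1, u2, hv1, hv2, hu1, hu2, hv12, hu12, hne, hxv2, hv21, hv1y, hxu2, hu21, hu1y⟩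
  simp only [Set.mem_insert_iff, Set.mem_singleton_iff, not_or] at hv1 hv2 hu1 hu2
  obtain ⟨-, hv1x, hv1y'⟩ := hv1
  obtain ⟨-, hv2x, hv2y⟩ := hv2
  obtain ⟨-, hu1x, hu1y'⟩ := hu1
  obtain ⟨-, hu2x, hu2y⟩ := hu2
  by_cases h12 : v1 = u2
  · subst h12
    exact no3 G h3 hxv2 hv21 hxu2.symm
  by_cases h21 : v2 = u1
  · subst h21
    exact no3 G h3 hv21 hv1y hu1y.symm
  by_cases hA : v1 = u1
  · subst hA
    have hBu : v2 ≠ u2 := by tauto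
    exact no4 G h4 hxv2 hv21 hu21.symm hxu2.symm (Ne.symm hv1x) hBu
  by_cases hB : v2 = u2
  · subst hB
    exact no4 G h4 hv1y.symm hv21.symm hu21 hu1y (Ne.symm hv2y) hA
  · exact no6 G h6 hxv2 hv21 hv1y hu1y.symm hu21.symm hxu2.symm
      (Ne.symm hv1x) hxy (Ne.symm hu1x) hv2y h21 hB hA h12 (Ne.symm hu2y)
end
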